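/- arXiv:math/9906174 — 6 statements merged into one kernel-verified Lean document; each statement's English description precedes it below -/
import Mathlib

section
/- Suppose L/k is a biquadratic extension of number fields and k₁, k₂, k₃ are the three quadratic extensions of k contained in L. Then r₁(L) + 2·r₁(k) = r₁(k₁) + r₁(k₂) + r₁(k₃) and r₂(L) + 2·r₂(k) = r₂(k₁) + r₂(k₂) + r₂(k₃). -/
open NumberField NumberField.InfinitePlace Module

open scoped Classical

lemma aux_nrReal_eq (A : Type*) [Field A] [NumberField A] :
    nrRealPlaces A = (Finset.univ.filter
      fun φ : A →+* ℂ => ComplexEmbedding.IsReal φ).card := by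
  rw [← card_real_embeddings, Fintype.card_subtype]

lemma aux_card_lifts {A B : Type*} [Field A] [Field B] [NumberField A] [NumberField B]
    [Algebra A B] [FiniteDimensional A B] (ψ : A →+* ℂ) :
    (Finset.univ.filter fun φ : B →+* ℂ => φ.comp (algebraMap A B) = ψ).card
      = finrank A B := by
  rw [← Fintype.card_subtype]
  letI : Algebra A ℂ := ψ.toAlgebra
  rw [← AlgHom.card A B ℂ]
  refine Fintype.card_congr
    ⟨fun φ => ⟨φ.1, fun x => (RingHom.congr_fun φ.2 x : _)⟩,
     fun f => ⟨f.toRingHom, RingHom.ext fun x => f.commutes x⟩,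
     fun _ => rfl, fun _ => rfl⟩

/-- For a biquadratic extension `L/k` of number fields with quadratic intermediate fields
`k₁, k₂, k₃`, one has `r₁(L) + 2r₁(k) = r₁(k₁) + r₁(k₂) + r₁(k₃)` and
`r₂(L) + 2r₂(k) = r₂(k₁) + r₂(k₂) + r₂(k₃)`. -/
theorem biquadratic_places {k L : Type*} [Field k] [Field L] [NumberField k] [NumberField L]
    [Algebra k L] [IsGalois k L] (hdeg : finrank k L = 4)
    (hgal : Nonempty ((L ≃ₐ[k] L) ≃* (Multiplicative (ZMod 2) × Multiplicative (ZMod 2))))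
    (k₁ k₂ k₃ : IntermediateField k L)
    [NumberField k₁] [NumberField k₂] [NumberField k₃]
    (h1 : finrank k k₁ = 2) (h2 : finrank k k₂ = 2) (h3 : finrank k k₃ = 2)
    (h12 : k₁ ≠ k₂) (h13 : k₁ ≠ k₃) (h23 : k₂ ≠ k₃) :
    nrRealPlaces L + 2 * nrRealPlaces k =
      nrRealPlaces k₁ + nrRealPlaces k₂ + nrRealPlaces k₃ ∧
    nrComplexPlaces L + 2 * nrComplexPlaces k =
      nrComplexPlaces k₁ + nrComplexPlaces k₂ + nrComplexPlaces k₃ := by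
  classical
  obtain ⟨e⟩ := hgal
  haveI t1 : IsScalarTower ℚ k L := IsScalarTower.of_algebraMap_eq' (Subsingleton.elim _ _)
  haveI : FiniteDimensional k L := Module.Finite.of_restrictScalars_finite ℚ k L
  have hGcard : Fintype.card (L ≃ₐ[k] L) = 4 := by
    rw [← Nat.card_eq_fintype_card, IsGalois.card_aut_eq_finrank]; exact hdeg
  have hcomm : ∀ a b : L ≃ₐ[k] L, a * b = b * a := fun a b =>
    e.injective (by rw [map_mul, map_mul, mul_comm])
  -- the degree of `L` over a quadratic intermediate field is 2
  have frank : ∀ M : IntermediateField k L, finrank k ↥M = 2 → finrank ↥M L = 2 := by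
    intro M hM
    have := Module.finrank_mul_finrank k ↥M L
    rw [hM, hdeg] at this
    omega
  -- the fixing subgroup of a quadratic intermediate field is `{1, x}` for some `x ≠ 1`
  have hfix : ∀ M : IntermediateField k L, finrank k ↥M = 2 →
      ∃ x : L ≃ₐ[k] L, x ≠ 1 ∧ ∀ g : L ≃ₐ[k] L, g ∈ M.fixingSubgroup ↔ g = 1 ∨ g = x := by
    intro M hM
    have hcard : Nat.card M.fixingSubgroup = 2 := by
      rw [IsGalois.card_fixingSubgroup_eq_finrank]
      exact frank M hM
    obtain ⟨y, hy1, hy2⟩ := (Nat.card_eq_two_iff' (1 : M.fixingSubgroup)).mp hcard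
    refine ⟨(y : L ≃ₐ[k] L), ?_, fun g => ⟨fun hg => ?_, fun hg => ?_⟩⟩
    · intro h
      exact hy1 (Subtype.ext h)
    · by_cases h1 : (⟨g, hg⟩ : M.fixingSubgroup) = 1
      · left; exact congrArg Subtype.val h1
      · right; exact congrArg Subtype.val (hy2 ⟨g, hg⟩ h1)
    · rcases hg with rfl | rfl
      · exact one_mem _
      · exact y.2
  obtain ⟨x₁, hx₁, s₁⟩ := hfix k₁ h1
  obtain ⟨x₂, hx₂, s₂⟩ := hfix k₂ h2
  obtain ⟨x₃, hx₃, s₃⟩ := hfix k₃ h3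
  -- distinctness of the `xᵢ`
  have hdist : ∀ (M M' : IntermediateField k L) (x x' : L ≃ₐ[k] L),
      (∀ g : L ≃ₐ[k] L, g ∈ M.fixingSubgroup ↔ g = 1 ∨ g = x) →
      (∀ g : L ≃ₐ[k] L, g ∈ M'.fixingSubgroup ↔ g = 1 ∨ g = x') →
      M ≠ M' → x ≠ x' := by
    intro M M' x x' hs hs' hMM' hxx'
    apply hMM'
    have hsub : M.fixingSubgroup = M'.fixingSubgroup := by
      ext g; rw [hs, hs', hxx']
    rw [← IsGalois.fixedField_fixingSubgroup M, ← IsGalois.fixedField_fixingSubgroup M', hsub]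
  have d12 : x₁ ≠ x₂ := hdist k₁ k₂ x₁ x₂ s₁ s₂ h12
  have d13 : x₁ ≠ x₃ := hdist k₁ k₃ x₁ x₃ s₁ s₃ h13
  have d23 : x₂ ≠ x₃ := hdist k₂ k₃ x₂ x₃ s₂ s₃ h23
  -- every element of the Galois group is `1` or one of the `xᵢ`
  have henum : ∀ g : L ≃ₐ[k] L, g = 1 ∨ g = x₁ ∨ g = x₂ ∨ g = x₃ := by
    intro g
    have hcard4 : ({1, x₁, x₂, x₃} : Finset (L ≃ₐ[k] L)).card = 4 := by
      rw [Finset.card_insert_of_notMem (by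
            simp only [Finset.mem_insert, Finset.mem_singleton]
            push_neg
            exact ⟨Ne.symm hx₁, Ne.symm hx₂, Ne.symm hx₃⟩),
          Finset.card_insert_of_notMem (by
            simp only [Finset.mem_insert, Finset.mem_singleton]
            push_neg
            exact ⟨d12, d13⟩),
          Finset.card_pair d23]
    have huniv : ({1, x₁, x₂, x₃} : Finset (L ≃ₐ[k] L)) = Finset.univ :=
      Finset.eq_univ_of_card _ (by rw [hcard4, hGcard])
    have := Finset.mem_univ g
    rw [← huniv] at this
    simpa using this
  -- the per-fiber identity over a real embedding `ρ` of `k`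
  have key : ∀ ρ : k →+* ℂ, ComplexEmbedding.IsReal ρ →
      2 * (Finset.univ.filter fun φ : L →+* ℂ =>
            ComplexEmbedding.IsReal φ ∧ φ.comp (algebraMap k L) = ρ).card + 4
      = (Finset.univ.filter fun φ : L →+* ℂ =>
            ComplexEmbedding.IsReal (φ.comp (algebraMap ↥k₁ L)) ∧
              φ.comp (algebraMap k L) = ρ).card
        + (Finset.univ.filter fun φ : L →+* ℂ =>
            ComplexEmbedding.IsReal (φ.comp (algebraMap ↥k₂ L)) ∧
              φ.comp (algebraMap k L) = ρ).card
        + (Finset.univ.filter fun φ : L →+* ℂ =>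
            ComplexEmbedding.IsReal (φ.comp (algebraMap ↥k₃ L)) ∧
              φ.comp (algebraMap k L) = ρ).card := by
    intro ρ hρ
    letI : Algebra k ℂ := ρ.toAlgebra
    haveI : Algebra.IsAlgebraic k L := Algebra.IsAlgebraic.of_finite k L
    let τ : L →ₐ[k] ℂ := IsAlgClosed.lift
    set τ0 : L →+* ℂ := (τ : L →+* ℂ) with hτ0
    have hτres : τ0.comp (algebraMap k L) = ρ := by
      ext x
      exact (τ.commutes x).trans (by rw [RingHom.algebraMap_toAlgebra])
    have hconjres : (ComplexEmbedding.conjugate τ0).comp (algebraMap k L) = ρ := by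
      ext x
      have hx := RingHom.congr_fun hτres x
      simp only [RingHom.comp_apply] at hx ⊢
      rw [ComplexEmbedding.conjugate_coe_eq, hx]
      have := RingHom.congr_fun (ComplexEmbedding.isReal_iff.mp hρ) x
      rwa [ComplexEmbedding.conjugate_coe_eq] at this
    obtain ⟨σ₀, hσ₀⟩ := NumberField.ComplexEmbedding.exists_comp_symm_eq_of_comp_eq τ0
      (ComplexEmbedding.conjugate τ0) (by rw [hτres, hconjres])
    set g₀ : L ≃ₐ[k] L := σ₀.symm with hg₀def
    have hconj_pt : ∀ y : L, (starRingEnd ℂ) (τ0 y) = τ0 (g₀ y) := by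
      intro y
      have hy := RingHom.congr_fun hσ₀ y
      rw [RingHom.comp_apply] at hy
      rw [← ComplexEmbedding.conjugate_coe_eq, ← hy]
      rfl
    have hsurj : ∀ φ : L →+* ℂ, φ.comp (algebraMap k L) = ρ →
        ∃ g : L ≃ₐ[k] L, φ = τ0.comp (g : L →+* L) := by
      intro φ hφ
      obtain ⟨σ, hσ⟩ := NumberField.ComplexEmbedding.exists_comp_symm_eq_of_comp_eq τ0 φ
        (by rw [hτres, hφ])
      exact ⟨σ.symm, hσ.symm⟩
    -- characterization of reality of the restriction to an intermediate field
    have hchar : ∀ (M : IntermediateField k L) (φ : L →+* ℂ), φ.comp (algebraMap k L) = ρ →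
        (ComplexEmbedding.IsReal (φ.comp (algebraMap ↥M L)) ↔ g₀ ∈ M.fixingSubgroup) := by
      intro M φ hφ
      obtain ⟨g, rfl⟩ := hsurj φ hφ
      rw [ComplexEmbedding.isReal_iff]
      constructor
      · intro h
        rw [M.mem_fixingSubgroup_iff]
        intro x hx
        have hh := RingHom.congr_fun h (⟨x, hx⟩ : ↥M)
        simp only [RingHom.comp_apply, ComplexEmbedding.conjugate_coe_eq] at hh
        rw [hconj_pt] at hh
        have h2 : g₀ (g (algebraMap ↥M L ⟨x, hx⟩)) = g (algebraMap ↥M L ⟨x, hx⟩) :=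
          τ0.injective hh
        have h3 : g (g₀ (algebraMap ↥M L ⟨x, hx⟩)) = g (algebraMap ↥M L ⟨x, hx⟩) := by
          rw [← AlgEquiv.mul_apply, hcomm, AlgEquiv.mul_apply]
          exact h2
        have h4 := g.injective h3
        simpa using h4
      · intro h
        ext x
        simp only [RingHom.comp_apply, ComplexEmbedding.conjugate_coe_eq]
        rw [hconj_pt]
        congr 1
        have hg₀x : g₀ (algebraMap ↥M L x) = algebraMap ↥M L x :=
          (M.mem_fixingSubgroup_iff g₀).mp h _ x.2
        show g₀ (g (algebraMap ↥M L x)) = g (algebraMap ↥M L x)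
        rw [← AlgEquiv.mul_apply, hcomm, AlgEquiv.mul_apply, hg₀x]
    -- characterization of reality of an embedding of `L`
    have hcharL : ∀ φ : L →+* ℂ, φ.comp (algebraMap k L) = ρ →
        (ComplexEmbedding.IsReal φ ↔ g₀ = 1) := by
      intro φ hφ
      obtain ⟨g, rfl⟩ := hsurj φ hφ
      rw [ComplexEmbedding.isReal_iff]
      constructor
      · intro h
        apply AlgEquiv.ext
        intro y
        have hh := RingHom.congr_fun h (g.symm y)
        simp only [RingHom.comp_apply, ComplexEmbedding.conjugate_coe_eq] at hh
        rw [hconj_pt] at hh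
        have h2 := τ0.injective hh
        simpa using h2
      · intro h
        ext x
        simp only [RingHom.comp_apply, ComplexEmbedding.conjugate_coe_eq]
        rw [hconj_pt, h]
        simp
    have hcount4 : (Finset.univ.filter fun φ : L →+* ℂ =>
        φ.comp (algebraMap k L) = ρ).card = 4 := by
      rw [aux_card_lifts, hdeg]
    have hcM : ∀ M : IntermediateField k L,
        (Finset.univ.filter fun φ : L →+* ℂ =>
          ComplexEmbedding.IsReal (φ.comp (algebraMap ↥M L)) ∧
            φ.comp (algebraMap k L) = ρ).card
        = if g₀ ∈ M.fixingSubgroup then 4 else 0 := by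
      intro M
      split_ifs with hg
      · rw [← hcount4]
        congr 1
        apply Finset.filter_congr
        intro φ _
        exact ⟨And.right, fun hq => ⟨(hchar M φ hq).mpr hg, hq⟩⟩
      · exact Finset.card_eq_zero.mpr (Finset.filter_eq_empty_iff.mpr
          (fun φ _ => by rintro ⟨hP, hQ⟩; exact hg ((hchar M φ hQ).mp hP)))
    have hcL : (Finset.univ.filter fun φ : L →+* ℂ =>
        ComplexEmbedding.IsReal φ ∧ φ.comp (algebraMap k L) = ρ).card
        = if g₀ = 1 then 4 else 0 := by
      split_ifs with hg
      · rw [← hcount4]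
        congr 1
        apply Finset.filter_congr
        intro φ _
        exact ⟨And.right, fun hq => ⟨(hcharL φ hq).mpr hg, hq⟩⟩
      · exact Finset.card_eq_zero.mpr (Finset.filter_eq_empty_iff.mpr
          (fun φ _ => by rintro ⟨hP, hQ⟩; exact hg ((hcharL φ hQ).mp hP)))
    rw [hcL, hcM k₁, hcM k₂, hcM k₃]
    by_cases hg : g₀ = 1
    · rw [if_pos hg, if_pos ((s₁ g₀).mpr (Or.inl hg)), if_pos ((s₂ g₀).mpr (Or.inl hg)),
        if_pos ((s₃ g₀).mpr (Or.inl hg))]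
    · rw [if_neg hg]
      have mem_iff : ∀ (M : IntermediateField k L) (x : L ≃ₐ[k] L),
          (∀ g' : L ≃ₐ[k] L, g' ∈ M.fixingSubgroup ↔ g' = 1 ∨ g' = x) →
          g₀ ≠ x → g₀ ∉ M.fixingSubgroup := by
        intro M x hs hne hm
        rcases (hs g₀).mp hm with h' | h'
        · exact hg h'
        · exact hne h'
      rcases henum g₀ with h | h | h | h
      · exact absurd h hg
      · rw [if_pos ((s₁ g₀).mpr (Or.inr h)),
          if_neg (mem_iff k₂ x₂ s₂ (fun hx => d12 (h.symm.trans hx))),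
          if_neg (mem_iff k₃ x₃ s₃ (fun hx => d13 (h.symm.trans hx)))]
      · rw [if_neg (mem_iff k₁ x₁ s₁ (fun hx => d12 (hx.symm.trans h))),
          if_pos ((s₂ g₀).mpr (Or.inr h)),
          if_neg (mem_iff k₃ x₃ s₃ (fun hx => d23 (h.symm.trans hx)))]
      · rw [if_neg (mem_iff k₁ x₁ s₁ (fun hx => d13 (hx.symm.trans h))),
          if_neg (mem_iff k₂ x₂ s₂ (fun hx => d23 (hx.symm.trans h))),
          if_pos ((s₃ g₀).mpr (Or.inr h))]
  -- global counting
  have hglob : ∀ (M : IntermediateField k L) (_ : NumberField ↥M), finrank k ↥M = 2 →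
      (Finset.univ.filter fun φ : L →+* ℂ =>
        ComplexEmbedding.IsReal (φ.comp (algebraMap ↥M L))).card = 2 * nrRealPlaces ↥M := by
    intro M _ hM
    haveI : FiniteDimensional ↥M L := FiniteDimensional.right k ↥M L
    rw [aux_nrReal_eq ↥M]
    rw [Finset.card_eq_sum_card_fiberwise
      (f := fun φ : L →+* ℂ => φ.comp (algebraMap ↥M L))
      (t := Finset.univ.filter fun ψ : ↥M →+* ℂ => ComplexEmbedding.IsReal ψ)
      (fun φ hφ => by
        simp only [Finset.coe_filter, Finset.mem_filter, Finset.mem_univ, true_and, Set.mem_setOf_eq] at hφ ⊢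
        exact hφ)]
    have hfib : ∀ ψ ∈ Finset.univ.filter
        (fun ψ : ↥M →+* ℂ => ComplexEmbedding.IsReal ψ),
        ((Finset.univ.filter fun φ : L →+* ℂ =>
          ComplexEmbedding.IsReal (φ.comp (algebraMap ↥M L))).filter
            fun φ => φ.comp (algebraMap ↥M L) = ψ).card = 2 := by
      intro ψ hψ
      rw [Finset.filter_filter]
      have heq : (Finset.univ.filter fun φ : L →+* ℂ =>
          ComplexEmbedding.IsReal (φ.comp (algebraMap ↥M L)) ∧
            φ.comp (algebraMap ↥M L) = ψ)
          = Finset.univ.filter fun φ : L →+* ℂ => φ.comp (algebraMap ↥M L) = ψ :=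
        Finset.filter_congr fun φ _ =>
          ⟨And.right, fun h => ⟨h ▸ (Finset.mem_filter.mp hψ).2, h⟩⟩
      rw [heq, aux_card_lifts, frank M hM]
    rw [Finset.sum_congr rfl hfib, Finset.sum_const, smul_eq_mul, mul_comm]
  -- fiberwise decomposition over the real embeddings of `k`
  have hmapsM : ∀ (M : IntermediateField k L) (φ : L →+* ℂ),
      ComplexEmbedding.IsReal (φ.comp (algebraMap ↥M L)) →
      ComplexEmbedding.IsReal (φ.comp (algebraMap k L)) := by
    intro M φ h
    rw [IsScalarTower.algebraMap_eq k ↥M L, ← RingHom.comp_assoc]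
    exact h.comp _
  have decompL : (Finset.univ.filter fun φ : L →+* ℂ => ComplexEmbedding.IsReal φ).card
      = ∑ ρ ∈ Finset.univ.filter (fun ρ : k →+* ℂ => ComplexEmbedding.IsReal ρ),
          (Finset.univ.filter fun φ : L →+* ℂ =>
            ComplexEmbedding.IsReal φ ∧ φ.comp (algebraMap k L) = ρ).card := by
    rw [Finset.card_eq_sum_card_fiberwise
      (f := fun φ : L →+* ℂ => φ.comp (algebraMap k L))
      (t := Finset.univ.filter fun ρ : k →+* ℂ => ComplexEmbedding.IsReal ρ)
      (fun φ hφ => by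
        simp only [Finset.coe_filter, Finset.mem_filter, Finset.mem_univ, true_and, Set.mem_setOf_eq] at hφ ⊢
        exact hφ.comp _)]
    exact Finset.sum_congr rfl fun ρ _ => by rw [Finset.filter_filter]
  have decompM : ∀ M : IntermediateField k L,
      (Finset.univ.filter fun φ : L →+* ℂ =>
        ComplexEmbedding.IsReal (φ.comp (algebraMap ↥M L))).card
      = ∑ ρ ∈ Finset.univ.filter (fun ρ : k →+* ℂ => ComplexEmbedding.IsReal ρ),
          (Finset.univ.filter fun φ : L →+* ℂ =>
            ComplexEmbedding.IsReal (φ.comp (algebraMap ↥M L)) ∧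
              φ.comp (algebraMap k L) = ρ).card := by
    intro M
    rw [Finset.card_eq_sum_card_fiberwise
      (f := fun φ : L →+* ℂ => φ.comp (algebraMap k L))
      (t := Finset.univ.filter fun ρ : k →+* ℂ => ComplexEmbedding.IsReal ρ)
      (fun φ hφ => by
        simp only [Finset.coe_filter, Finset.mem_filter, Finset.mem_univ, true_and, Set.mem_setOf_eq] at hφ ⊢
        exact hmapsM M φ hφ)]
    exact Finset.sum_congr rfl fun ρ _ => by rw [Finset.filter_filter]
  -- assemble the real-places identity
  have main2 : 2 * (Finset.univ.filter fun φ : L →+* ℂ => ComplexEmbedding.IsReal φ).card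
      + 4 * (Finset.univ.filter fun ρ : k →+* ℂ => ComplexEmbedding.IsReal ρ).card
      = (Finset.univ.filter fun φ : L →+* ℂ =>
          ComplexEmbedding.IsReal (φ.comp (algebraMap ↥k₁ L))).card
        + (Finset.univ.filter fun φ : L →+* ℂ =>
          ComplexEmbedding.IsReal (φ.comp (algebraMap ↥k₂ L))).card
        + (Finset.univ.filter fun φ : L →+* ℂ =>
          ComplexEmbedding.IsReal (φ.comp (algebraMap ↥k₃ L))).card := by
    rw [decompL, decompM k₁, decompM k₂, decompM k₃, Finset.mul_sum,
      ← Finset.sum_add_distrib, ← Finset.sum_add_distrib]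
    have : 4 * (Finset.univ.filter fun ρ : k →+* ℂ => ComplexEmbedding.IsReal ρ).card
        = ∑ _ρ ∈ Finset.univ.filter (fun ρ : k →+* ℂ => ComplexEmbedding.IsReal ρ), 4 := by
      rw [Finset.sum_const, smul_eq_mul, mul_comm]
    rw [this, ← Finset.sum_add_distrib]
    exact Finset.sum_congr rfl fun ρ hρ =>
      key ρ (by simpa using (Finset.mem_filter.mp hρ).2)
  have hr1 : nrRealPlaces L + 2 * nrRealPlaces k =
      nrRealPlaces k₁ + nrRealPlaces k₂ + nrRealPlaces k₃ := by
    have e1 := hglob k₁ ‹_› h1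
    have e2 := hglob k₂ ‹_› h2
    have e3 := hglob k₃ ‹_› h3
    rw [e1, e2, e3] at main2
    rw [← aux_nrReal_eq L, ← aux_nrReal_eq k] at main2
    omega
  refine ⟨hr1, ?_⟩
  -- the complex-places identity follows by degree bookkeeping
  haveI t2 : IsScalarTower ℚ k ↥k₁ := IsScalarTower.of_algebraMap_eq' (Subsingleton.elim _ _)
  haveI t3 : IsScalarTower ℚ k ↥k₂ := IsScalarTower.of_algebraMap_eq' (Subsingleton.elim _ _)
  haveI t4 : IsScalarTower ℚ k ↥k₃ := IsScalarTower.of_algebraMap_eq' (Subsingleton.elim _ _)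
  have dL := card_add_two_mul_card_eq_rank L
  have dk := card_add_two_mul_card_eq_rank k
  have d1 := card_add_two_mul_card_eq_rank ↥k₁
  have d2 := card_add_two_mul_card_eq_rank ↥k₂
  have d3 := card_add_two_mul_card_eq_rank ↥k₃
  have degL : finrank ℚ k * 4 = finrank ℚ L := by
    rw [← Module.finrank_mul_finrank ℚ k L, hdeg]
  have deg1 : finrank ℚ k * 2 = finrank ℚ ↥k₁ := by
    rw [← Module.finrank_mul_finrank ℚ k ↥k₁, h1]
  have deg2 : finrank ℚ k * 2 = finrank ℚ ↥k₂ := by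
    rw [← Module.finrank_mul_finrank ℚ k ↥k₂, h2]
  have deg3 : finrank ℚ k * 2 = finrank ℚ ↥k₃ := by
    rw [← Module.finrank_mul_finrank ℚ k ↥k₃, h3]
  omega
end

section
/- Let k be a field of characteristic zero and p(z) = z² + a₁z + a₂ ∈ k[z] a quadratic polynomial with distinct roots (i.e. a₁² − 4a₂ ≠ 0). Then the stabilizer of w_p in GL₂(k)³, i.e. {g ∈ GL₂(k)³ : g·w_p = w_p}, equals the disjoint union S ⊔ (τ_p, τ_p, τ_p)·S, where S is the set of triples (A_p(c₁,d₁), A_p(c₂,d₂), A_p(c₃,d₃)) with c_i, d_i ∈ k, A_p(c₁,d₁) and A_p(c₂,d₂) invertible, and A_p(c₃,d₃) = A_p(c₁,d₁)^{-1} A_p(c₂,d₂)^{-1}. -/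
open Matrix
open scoped MatrixGroups

variable {R : Type*} [CommRing R]

/-- The matrix `A_p(c,d)` attached to `p(z) = z² + a₁z + a₂`. -/
def Ap (a₁ a₂ c d : R) : Matrix (Fin 2) (Fin 2) R := !![c, -d; a₂ * d, c - a₁ * d]

/-- The matrix `τ_p` attached to `p(z) = z² + a₁z + a₂`. -/
def taup (a₁ : R) : Matrix (Fin 2) (Fin 2) R := !![-1, 0; -a₁, 1]

/-- The element `w_p` attached to `p(z) = z² + a₁z + a₂`. -/
def wp (a₁ a₂ : R) : Matrix (Fin 2) (Fin 2) R × Matrix (Fin 2) (Fin 2) R :=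
  (!![0, 1; 1, a₁], !![1, a₁; a₁, a₁ ^ 2 - a₂])

/-- The action of `GL₂ × GL₂ × GL₂` on pairs of `2 × 2` matrices, given by
`M_{g·x}(v) = g₁ M_x(v g₃) ᵗg₂` where `M_x(v) = v₁x₁ + v₂x₂`. -/
def actV (g : GL (Fin 2) R × GL (Fin 2) R × GL (Fin 2) R)
    (x : Matrix (Fin 2) (Fin 2) R × Matrix (Fin 2) (Fin 2) R) :
    Matrix (Fin 2) (Fin 2) R × Matrix (Fin 2) (Fin 2) R :=
  ((g.1 : Matrix (Fin 2) (Fin 2) R) *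
      ((g.2.2 : Matrix (Fin 2) (Fin 2) R) 0 0 • x.1 +
        (g.2.2 : Matrix (Fin 2) (Fin 2) R) 0 1 • x.2) *
      (g.2.1 : Matrix (Fin 2) (Fin 2) R)ᵀ,
   (g.1 : Matrix (Fin 2) (Fin 2) R) *
      ((g.2.2 : Matrix (Fin 2) (Fin 2) R) 1 0 • x.1 +
        (g.2.2 : Matrix (Fin 2) (Fin 2) R) 1 1 • x.2) *
      (g.2.1 : Matrix (Fin 2) (Fin 2) R)ᵀ)

/-- The set `S` of triples `(A_p(c₁,d₁), A_p(c₂,d₂), A_p(c₃,d₃))` with the first two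
invertible and `A_p(c₃,d₃) = A_p(c₁,d₁)⁻¹ A_p(c₂,d₂)⁻¹`. -/
def SetS (a₁ a₂ : R) : Set (GL (Fin 2) R × GL (Fin 2) R × GL (Fin 2) R) :=
  {g | ∃ c₁ d₁ c₂ d₂ c₃ d₃ : R,
    IsUnit (Ap a₁ a₂ c₁ d₁).det ∧ IsUnit (Ap a₁ a₂ c₂ d₂).det ∧
    (g.1 : Matrix (Fin 2) (Fin 2) R) = Ap a₁ a₂ c₁ d₁ ∧
    (g.2.1 : Matrix (Fin 2) (Fin 2) R) = Ap a₁ a₂ c₂ d₂ ∧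
    (g.2.2 : Matrix (Fin 2) (Fin 2) R) = Ap a₁ a₂ c₃ d₃ ∧
    Ap a₁ a₂ c₃ d₃ = (Ap a₁ a₂ c₁ d₁)⁻¹ * (Ap a₁ a₂ c₂ d₂)⁻¹}

/-- The translate `(τ_p, τ_p, τ_p)·S` of the set `SetS`. -/
def SetT (a₁ a₂ : R) : Set (GL (Fin 2) R × GL (Fin 2) R × GL (Fin 2) R) :=
  {g | ∃ c₁ d₁ c₂ d₂ c₃ d₃ : R,
    IsUnit (Ap a₁ a₂ c₁ d₁).det ∧ IsUnit (Ap a₁ a₂ c₂ d₂).det ∧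
    (g.1 : Matrix (Fin 2) (Fin 2) R) = taup a₁ * Ap a₁ a₂ c₁ d₁ ∧
    (g.2.1 : Matrix (Fin 2) (Fin 2) R) = taup a₁ * Ap a₁ a₂ c₂ d₂ ∧
    (g.2.2 : Matrix (Fin 2) (Fin 2) R) = taup a₁ * Ap a₁ a₂ c₃ d₃ ∧
    Ap a₁ a₂ c₃ d₃ = (Ap a₁ a₂ c₁ d₁)⁻¹ * (Ap a₁ a₂ c₂ d₂)⁻¹}

/-! ### Auxiliary lemmas -/

lemma Ap_mul (a b c d c' d' : R) :
    Ap a b c d * Ap a b c' d' =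
      Ap a b (c*c' - b*(d*d')) (c*d' + c'*d - a*(d*d')) := by
  ext i j
  fin_cases i <;> fin_cases j <;>
    simp [Ap, Matrix.mul_apply, Fin.sum_univ_two] <;> ring

lemma Ap_comm (a b c d c' d' : R) :
    Ap a b c d * Ap a b c' d' = Ap a b c' d' * Ap a b c d := by
  rw [Ap_mul, Ap_mul]; ring_nf

lemma Ap_Ct_comm (a b c d : R) :
    Ap a b c d * !![0,1;-b,a] = !![0,1;-b,a] * Ap a b c d := by
  ext i j
  fin_cases i <;> fin_cases j <;>
    simp [Ap, Matrix.mul_apply, Fin.sum_univ_two] <;> ring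

lemma Ap_transpose (a b c d : R) : (Ap a b c d)ᵀ = !![c, b*d; -d, c - a*d] := by
  ext i j
  fin_cases i <;> fin_cases j <;> simp [Ap]

lemma taup_transpose (a : R) : (taup a)ᵀ = !![-1,-a;0,1] := by
  ext i j
  fin_cases i <;> fin_cases j <;> simp [taup]

lemma Ap_mul_X1 (a b c d : R) :
    Ap a b c d * !![0,1;1,a] = !![0,1;1,a] * (Ap a b c d)ᵀ := by
  rw [Ap_transpose]
  ext i j
  fin_cases i <;> fin_cases j <;>
    simp [Ap, Matrix.mul_apply, Fin.sum_univ_two] <;> ring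

lemma comm_to_Ap {a b : R} {M : Matrix (Fin 2) (Fin 2) R}
    (h : M * !![0,1;-b,a] = !![0,1;-b,a] * M) :
    M = Ap a b (M 0 0) (-(M 0 1)) := by
  have e00 : (M * !![0,1;-b,a]) 0 0 = (!![0,1;-b,a] * M) 0 0 := by rw [h]
  have e01 : (M * !![0,1;-b,a]) 0 1 = (!![0,1;-b,a] * M) 0 1 := by rw [h]
  simp [Matrix.mul_apply, Fin.sum_univ_two] at e00 e01
  ext i j
  fin_cases i <;> fin_cases j
  · rfl
  · simp [Ap]
  · simp [Ap]; linear_combination -e00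
  · simp [Ap]; linear_combination -e01

lemma mul_cancel_right_isUnit {P X Y : Matrix (Fin 2) (Fin 2) R}
    (hP : IsUnit P.det) (h : X * P = Y * P) : X = Y := by
  have h2 := congrArg (fun Z => Z * P⁻¹) h
  simpa [Matrix.mul_assoc, Matrix.mul_nonsing_inv _ hP] using h2

lemma mul_cancel_left_isUnit {P X Y : Matrix (Fin 2) (Fin 2) R}
    (hP : IsUnit P.det) (h : P * X = P * Y) : X = Y := by
  have h2 := congrArg (fun Z => P⁻¹ * Z) h
  simpa [← Matrix.mul_assoc, Matrix.nonsing_inv_mul _ hP] using h2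

lemma stab_S1 (a b c₁ d₁ c₂ d₂ c₃ d₃ : R) :
    Ap a b c₁ d₁ * ((Ap a b c₃ d₃) 0 0 • !![0,1;1,a] + (Ap a b c₃ d₃) 0 1 • !![(1:R),a;a,a^2-b]) *
      (Ap a b c₂ d₂)ᵀ
      = !![(0:R),1;1,a] * (Ap a b c₁ d₁ * Ap a b c₃ d₃ * Ap a b c₂ d₂)ᵀ := by
  simp only [Matrix.transpose_mul, Ap_transpose]
  ext i j
  fin_cases i <;> fin_cases j <;>
    simp [Ap, Matrix.mul_apply, Fin.sum_univ_two] <;> ring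

lemma stab_S2 (a b c₁ d₁ c₂ d₂ c₃ d₃ : R) :
    Ap a b c₁ d₁ * ((Ap a b c₃ d₃) 1 0 • !![0,1;1,a] + (Ap a b c₃ d₃) 1 1 • !![(1:R),a;a,a^2-b]) *
      (Ap a b c₂ d₂)ᵀ
      = !![(1:R),a;a,a^2-b] * (Ap a b c₁ d₁ * Ap a b c₃ d₃ * Ap a b c₂ d₂)ᵀ := by
  simp only [Matrix.transpose_mul, Ap_transpose]
  ext i j
  fin_cases i <;> fin_cases j <;>
    simp [Ap, Matrix.mul_apply, Fin.sum_univ_two] <;> ring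

set_option maxHeartbeats 1000000 in
lemma stab_T1 (a b c₁ d₁ c₂ d₂ c₃ d₃ : R) :
    (taup a * Ap a b c₁ d₁) *
      ((taup a * Ap a b c₃ d₃) 0 0 • !![0,1;1,a] + (taup a * Ap a b c₃ d₃) 0 1 • !![(1:R),a;a,a^2-b]) *
      (taup a * Ap a b c₂ d₂)ᵀ
      = -(taup a * (!![(0:R),1;1,a] * (Ap a b c₁ d₁ * Ap a b c₃ d₃ * Ap a b c₂ d₂)ᵀ) * (taup a)ᵀ) := by
  simp only [Matrix.transpose_mul, Ap_transpose, taup_transpose]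
  ext i j
  fin_cases i <;> fin_cases j <;>
    simp [Ap, taup, Matrix.mul_apply, Fin.sum_univ_two] <;> ring

set_option maxHeartbeats 1000000 in
lemma stab_T2 (a b c₁ d₁ c₂ d₂ c₃ d₃ : R) :
    (taup a * Ap a b c₁ d₁) *
      ((taup a * Ap a b c₃ d₃) 1 0 • !![0,1;1,a] + (taup a * Ap a b c₃ d₃) 1 1 • !![(1:R),a;a,a^2-b]) *
      (taup a * Ap a b c₂ d₂)ᵀ
      = taup a * ((!![(1:R),a;a,a^2-b] - a • !![(0:R),1;1,a]) * (Ap a b c₁ d₁ * Ap a b c₃ d₃ * Ap a b c₂ d₂)ᵀ) * (taup a)ᵀ := by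
  simp only [Matrix.transpose_mul, Ap_transpose, taup_transpose]
  ext i j
  fin_cases i <;> fin_cases j <;>
    simp [Ap, taup, Matrix.mul_apply, Fin.sum_univ_two] <;> ring

lemma taup_conj_X1 (a b : R) : -(taup a * !![(0:R),1;1,a] * (taup a)ᵀ) = !![(0:R),1;1,a] := by
  rw [taup_transpose]
  ext i j
  fin_cases i <;> fin_cases j <;>
    simp [taup, Matrix.mul_apply, Fin.sum_univ_two] <;> ring

lemma taup_conj_X2 (a b : R) : taup a * (!![(1:R),a;a,a^2-b] - a • !![(0:R),1;1,a]) * (taup a)ᵀ = !![(1:R),a;a,a^2-b] := by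
  rw [taup_transpose]
  ext i j
  fin_cases i <;> fin_cases j <;>
    simp [taup, Matrix.mul_apply, Fin.sum_univ_two] <;> ring

lemma key_final {k : Type*} [Field k] {a b : k} {K : Matrix (Fin 2) (Fin 2) k} {c₁ d₁ c₃ d₃ : k}
    (h1 : IsUnit (Ap a b c₁ d₁).det)
    (hK : K * (Ap a b c₃ d₃ * Ap a b c₁ d₁) = 1) :
    ∃ c₂ d₂ : k, K = Ap a b c₂ d₂ ∧ IsUnit (Ap a b c₂ d₂).det ∧
      Ap a b c₃ d₃ = (Ap a b c₁ d₁)⁻¹ * (Ap a b c₂ d₂)⁻¹ := by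
  have hprod : Ap a b c₃ d₃ * Ap a b c₁ d₁
      = Ap a b (c₃*c₁ - b*(d₃*d₁)) (c₃*d₁ + c₁*d₃ - a*(d₃*d₁)) := Ap_mul a b c₃ d₃ c₁ d₁
  set e := c₃*c₁ - b*(d₃*d₁) with he
  set f := c₃*d₁ + c₁*d₃ - a*(d₃*d₁) with hf
  have hK' : K * Ap a b e f = 1 := by rw [← hprod]; exact hK
  have hKrev : Ap a b e f * K = 1 := mul_eq_one_comm.mp hK'
  have hcomm : K * !![0,1;-b,a] = !![0,1;-b,a] * K := by
    calc K * !![0,1;-b,a] = K * !![0,1;-b,a] * (Ap a b e f * K) := by rw [hKrev, mul_one]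
      _ = K * (!![0,1;-b,a] * Ap a b e f) * K := by simp only [Matrix.mul_assoc]
      _ = K * (Ap a b e f * !![0,1;-b,a]) * K := by rw [Ap_Ct_comm]
      _ = K * Ap a b e f * (!![0,1;-b,a] * K) := by simp only [Matrix.mul_assoc]
      _ = !![0,1;-b,a] * K := by rw [hK', one_mul]
  have hKA := comm_to_Ap hcomm
  have hdet : IsUnit K.det := by
    have := congrArg Matrix.det hK'
    rw [Matrix.det_mul, Matrix.det_one] at this
    exact IsUnit.of_mul_eq_one _ this
  have hKinv : K⁻¹ = Ap a b c₃ d₃ * Ap a b c₁ d₁ := by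
    rw [hprod]; exact Matrix.inv_eq_right_inv hK'
  refine ⟨K 0 0, -(K 0 1), hKA, by rw [← hKA]; exact hdet, ?_⟩
  rw [← hKA, hKinv, Ap_comm, ← Matrix.mul_assoc, Matrix.nonsing_inv_mul _ h1, one_mul]

lemma rel_to_one {k : Type*} [Field k] {a b c₁ d₁ c₂ d₂ c₃ d₃ : k}
    (u1 : IsUnit (Ap a b c₁ d₁).det) (u2 : IsUnit (Ap a b c₂ d₂).det)
    (hrel : Ap a b c₃ d₃ = (Ap a b c₁ d₁)⁻¹ * (Ap a b c₂ d₂)⁻¹) :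
    Ap a b c₁ d₁ * Ap a b c₃ d₃ * Ap a b c₂ d₂ = 1 := by
  rw [hrel, ← Matrix.mul_assoc, Matrix.mul_nonsing_inv _ u1, one_mul,
    Matrix.nonsing_inv_mul _ u2]

set_option maxHeartbeats 4000000 in
set_option maxHeartbeats 4000000 in
/-- Lemma 3.3 of the paper: over a field `k` of characteristic zero, the stabilizer of
`w_p` in `GL₂(k)³` is the disjoint union of `S` and `(τ_p,τ_p,τ_p)·S`. -/
theorem stabilizer_wp_split {k : Type*} [Field k] [CharZero k]
    (a₁ a₂ : k) (hp : a₁ ^ 2 - 4 * a₂ ≠ 0) :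
    {g : GL (Fin 2) k × GL (Fin 2) k × GL (Fin 2) k | actV g (wp a₁ a₂) = wp a₁ a₂} =
      SetS a₁ a₂ ∪ SetT a₁ a₂ ∧
    Disjoint (SetS a₁ a₂) (SetT a₁ a₂) := by
  constructor
  · ext g
    simp only [Set.mem_setOf_eq, Set.mem_union]
    constructor
    · intro hg
      have u1d : IsUnit (g.1 : Matrix (Fin 2) (Fin 2) k).det :=
        (Matrix.isUnit_iff_isUnit_det _).mp ⟨g.1, rfl⟩
      have u2d : IsUnit (g.2.1 : Matrix (Fin 2) (Fin 2) k).det :=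
        (Matrix.isUnit_iff_isUnit_det _).mp ⟨g.2.1, rfl⟩
      simp only [actV, wp, Prod.mk.injEq] at hg
      obtain ⟨eq1, eq2⟩ := hg
      set G1 := (g.1 : Matrix (Fin 2) (Fin 2) k) with hG1def
      set G2 := (g.2.1 : Matrix (Fin 2) (Fin 2) k) with hG2def
      set G3 := (g.2.2 : Matrix (Fin 2) (Fin 2) k) with hG3def
      set h00 := G3 0 0 with hh00
      set h01 := G3 0 1 with hh01
      set h10 := G3 1 0 with hh10
      set h11 := G3 1 1 with hh11
      set X1 : Matrix (Fin 2) (Fin 2) k := !![0, 1; 1, a₁] with hX1def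
      set X2 : Matrix (Fin 2) (Fin 2) k := !![1, a₁; a₁, a₁ ^ 2 - a₂] with hX2def
      set Ct : Matrix (Fin 2) (Fin 2) k := !![0, 1; -a₂, a₁] with hCtdef
      set P : Matrix (Fin 2) (Fin 2) k := !![h00, -(a₂*h01); h01, h00 + a₁*h01] with hPdef
      set Q : Matrix (Fin 2) (Fin 2) k := !![h10, -(a₂*h11); h11, h10 + a₁*h11] with hQdef
      have hX1det : X1.det = -1 := by rw [hX1def]; simp
      have hCtdet : Ct.det = a₂ := by rw [hCtdef]; simp
      have hX1unit : IsUnit X1.det := by rw [hX1det]; exact isUnit_one.neg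
      have u2td : IsUnit (G2ᵀ).det := by rw [Matrix.det_transpose]; exact u2d
      have hcomb1 : h00 • X1 + h01 • X2 = X1 * P := by
        rw [hX1def, hX2def, hPdef]
        ext i j
        fin_cases i <;> fin_cases j <;>
          simp [Matrix.mul_apply, Fin.sum_univ_two] <;> ring
      have hcomb2 : h10 • X1 + h11 • X2 = X1 * Q := by
        rw [hX1def, hX2def, hQdef]
        ext i j
        fin_cases i <;> fin_cases j <;>
          simp [Matrix.mul_apply, Fin.sum_univ_two] <;> ring
      rw [hcomb1] at eq1
      rw [hcomb2] at eq2
      have hCtX1 : Ct * X1 = X2 := by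
        rw [hX1def, hX2def, hCtdef]
        ext i j
        fin_cases i <;> fin_cases j <;>
          simp [Matrix.mul_apply, Fin.sum_univ_two] <;> ring
      -- invertibility of P
      have hdet1 := congrArg Matrix.det eq1
      simp only [Matrix.det_mul, Matrix.det_transpose, hX1det] at hdet1
      have hPdetne : P.det ≠ 0 := by
        intro h0
        rw [h0] at hdet1
        simp at hdet1
      have hPunit : IsUnit P.det := isUnit_iff_ne_zero.mpr hPdetne
      -- the key matrix equation E
      have E : Ct * (G1 * (X1 * P)) = G1 * (X1 * Q) := by
        apply mul_cancel_right_isUnit u2td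
        calc Ct * (G1 * (X1 * P)) * G2ᵀ = Ct * (G1 * (X1 * P) * G2ᵀ) := by
              simp only [Matrix.mul_assoc]
          _ = Ct * X1 := by rw [eq1]
          _ = X2 := hCtX1
          _ = G1 * (X1 * Q) * G2ᵀ := eq2.symm
      -- determinant relation
      have hdetE := congrArg Matrix.det E
      simp only [Matrix.det_mul, hX1det, hCtdet] at hdetE
      have t1 : Q.det = a₂ * P.det := by
        have h2 : G1.det * Q.det = G1.det * (a₂ * P.det) := by linear_combination hdetE
        exact mul_left_cancel₀ u1d.ne_zero h2
      -- trace relation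
      have hMd : IsUnit (G1 * X1).det := by
        rw [Matrix.det_mul, hX1det]
        exact u1d.mul isUnit_one.neg
      have E2 : P.det • (Ct * (G1 * X1)) = G1 * (X1 * Q) * P.adjugate := by
        calc P.det • (Ct * (G1 * X1)) = Ct * (G1 * X1) * (P.det • 1) := by
              rw [Matrix.mul_smul, mul_one]
          _ = Ct * (G1 * X1) * (P * P.adjugate) := by rw [Matrix.mul_adjugate]
          _ = Ct * (G1 * (X1 * P)) * P.adjugate := by simp only [Matrix.mul_assoc]
          _ = G1 * (X1 * Q) * P.adjugate := by rw [E]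
      have t2m : P.det * Ct.trace = (Q * P.adjugate).trace := by
        have tr1 := congrArg Matrix.trace (congrArg (fun Z => Z * (G1 * X1)⁻¹) E2)
        rw [Matrix.smul_mul, Matrix.mul_assoc, Matrix.mul_nonsing_inv _ hMd, mul_one] at tr1
        rw [Matrix.trace_smul, smul_eq_mul] at tr1
        have hr : G1 * (X1 * Q) * P.adjugate * (G1 * X1)⁻¹
            = (G1 * X1) * ((Q * P.adjugate) * (G1 * X1)⁻¹) := by
          simp only [Matrix.mul_assoc]
        rw [hr, Matrix.trace_mul_comm (G1 * X1) ((Q * P.adjugate) * (G1 * X1)⁻¹),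
          Matrix.mul_assoc, Matrix.nonsing_inv_mul _ hMd, mul_one] at tr1
        exact tr1
      -- scalar versions
      have hPdetval : P.det = h00^2 + a₁*(h00*h01) + a₂*h01^2 := by
        rw [hPdef]; simp [Matrix.det_fin_two_of]; ring
      have hQdetval : Q.det = h10^2 + a₁*(h10*h11) + a₂*h11^2 := by
        rw [hQdef]; simp [Matrix.det_fin_two_of]; ring
      have hCttr : Ct.trace = a₁ := by rw [hCtdef]; simp [Matrix.trace_fin_two]
      have hQadjtr : (Q * P.adjugate).trace
          = 2*(h00*h10 + a₁*(h01*h10) + a₂*(h01*h11)) + a₁*(h00*h11 - h01*h10) := by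
        rw [hQdef, hPdef]
        simp [Matrix.adjugate_fin_two_of, Matrix.trace_fin_two, Matrix.mul_apply,
          Fin.sum_univ_two]
        ring
      have t1s : h10^2 + a₁*(h10*h11) + a₂*h11^2
          = a₂ * (h00^2 + a₁*(h00*h01) + a₂*h01^2) := by
        rw [← hPdetval, ← hQdetval]; exact t1
      have t2s : a₁ * (h00^2 + a₁*(h00*h01) + a₂*h01^2)
          = 2*(h00*h10 + a₁*(h01*h10) + a₂*(h01*h11)) + a₁*(h00*h11 - h01*h10) := by
        rw [← hQadjtr, ← hPdetval, ← hCttr]; linear_combination t2m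
      have hDne : h00^2 + a₁*(h00*h01) + a₂*h01^2 ≠ 0 := by rw [← hPdetval]; exact hPdetne
      -- the case dichotomy
      have key : (((h00^2 + a₁*(h00*h01) + a₂*h01^2) - (h00*h11 - h01*h10)) *
            ((h00^2 + a₁*(h00*h01) + a₂*h01^2) + (h00*h11 - h01*h10))) * (a₁^2 - 4*a₂) = 0 := by
        linear_combination (4*(h00^2 + a₁*(h00*h01) + a₂*h01^2))*t1s +
          (2*(h00*h10 + a₁*(h01*h10) + a₂*(h01*h11)) + a₁*(h00^2 + a₁*(h00*h01) + a₂*h01^2)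
            + a₁*(h00*h11 - h01*h10))*t2s
      have key2 := (mul_eq_zero.mp key).resolve_right hp
      rcases mul_eq_zero.mp key2 with hVD | hVD
      · -- Case A : V = Δ, the SetS case
        have hU0 : h00*h10 + a₁*(h01*h10) + a₂*(h01*h11) = 0 := by
          have h2 : (2:k) * (h00*h10 + a₁*(h01*h10) + a₂*(h01*h11)) = 0 := by
            linear_combination -t2s + a₁*hVD
          exact (mul_eq_zero.mp h2).resolve_left two_ne_zero
        have f1 : h10 = -(a₂*h01) := by
          apply mul_left_cancel₀ hDne
          linear_combination h00*hU0 + (a₂*h01)*hVD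
        have f2 : h11 = h00 + a₁*h01 := by
          apply mul_left_cancel₀ hDne
          linear_combination (-h00)*hVD + h01*hU0 - (a₁*h01)*hVD
        -- Q = C * P
        have hQP : Q = !![0, -a₂; 1, a₁] * P := by
          rw [hQdef, hPdef]
          ext i j
          fin_cases i <;> fin_cases j <;>
            simp [Matrix.mul_apply, Fin.sum_univ_two, f1, f2] <;> ring
        -- commutation of G1 with Ct
        have hX1C : X1 * !![0, -a₂; 1, a₁] = Ct * X1 := by
          rw [hX1def, hCtdef]
          ext i j
          fin_cases i <;> fin_cases j <;>
            simp [Matrix.mul_apply, Fin.sum_univ_two] <;> ring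
        have E5 : Ct * G1 * X1 * P = G1 * Ct * X1 * P := by
          have := E
          rw [hQP] at this
          calc Ct * G1 * X1 * P = Ct * (G1 * (X1 * P)) := by simp only [Matrix.mul_assoc]
            _ = G1 * (X1 * (!![0, -a₂; 1, a₁] * P)) := this
            _ = G1 * ((X1 * !![0, -a₂; 1, a₁]) * P) := by simp only [Matrix.mul_assoc]
            _ = G1 * ((Ct * X1) * P) := by rw [hX1C]
            _ = G1 * Ct * X1 * P := by simp only [Matrix.mul_assoc]
        have E6 : Ct * G1 = G1 * Ct :=
          mul_cancel_right_isUnit hX1unit (mul_cancel_right_isUnit hPunit E5)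
        have hG1A : G1 = Ap a₁ a₂ (G1 0 0) (-(G1 0 1)) := by
          apply comm_to_Ap
          rw [← hCtdef]  -- make sure shapes match
          exact E6.symm
        set c1 := G1 0 0
        set d1 := -(G1 0 1)
        have uA1 : IsUnit (Ap a₁ a₂ c1 d1).det := by rw [← hG1A]; exact u1d
        -- solve for G2
        have hPA : P = (Ap a₁ a₂ h00 (-h01))ᵀ := by
          rw [Ap_transpose, hPdef]
          ext i j
          fin_cases i <;> fin_cases j <;> simp <;> ring
        have e7 : X1 * (Ap a₁ a₂ c1 d1)ᵀ * ((Ap a₁ a₂ h00 (-h01))ᵀ * G2ᵀ) = X1 := by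
          calc X1 * (Ap a₁ a₂ c1 d1)ᵀ * ((Ap a₁ a₂ h00 (-h01))ᵀ * G2ᵀ)
              = (X1 * (Ap a₁ a₂ c1 d1)ᵀ) * (Ap a₁ a₂ h00 (-h01))ᵀ * G2ᵀ := by
                simp only [Matrix.mul_assoc]
            _ = (Ap a₁ a₂ c1 d1 * X1) * (Ap a₁ a₂ h00 (-h01))ᵀ * G2ᵀ := by
                rw [hX1def, ← Ap_mul_X1]
            _ = Ap a₁ a₂ c1 d1 * (X1 * (Ap a₁ a₂ h00 (-h01))ᵀ) * G2ᵀ := by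
                simp only [Matrix.mul_assoc]
            _ = G1 * (X1 * P) * G2ᵀ := by rw [← hPA, ← hG1A]
            _ = X1 := eq1
        have hone : (Ap a₁ a₂ c1 d1)ᵀ * ((Ap a₁ a₂ h00 (-h01))ᵀ * G2ᵀ) = 1 := by
          apply mul_cancel_left_isUnit hX1unit
          rw [mul_one, ← Matrix.mul_assoc]
          exact e7
        have hfin : G2 * (Ap a₁ a₂ h00 (-h01) * Ap a₁ a₂ c1 d1) = 1 := by
          have := congrArg Matrix.transpose hone
          simpa [Matrix.transpose_mul, Matrix.mul_assoc] using this
        obtain ⟨c2, d2, hG2A, uA2, hrel⟩ := key_final uA1 hfin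
        left
        refine ⟨c1, d1, c2, d2, h00, -h01, uA1, uA2, hG1A, hG2A, ?_, hrel⟩
        ext i j
        fin_cases i <;> fin_cases j <;> simp [Ap]
        · rfl
        · rfl
        · exact f1
        · exact f2
      · -- Case B : V = -Δ, the SetT case
        have hU2 : h00*h10 + a₁*(h01*h10) + a₂*(h01*h11)
            = a₁*(h00^2 + a₁*(h00*h01) + a₂*h01^2) := by
          have h2 : (2:k) * ((h00*h10 + a₁*(h01*h10) + a₂*(h01*h11))
              - a₁*(h00^2 + a₁*(h00*h01) + a₂*h01^2)) = 0 := by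
            linear_combination -t2s - a₁*hVD
          have h3 := (mul_eq_zero.mp h2).resolve_left two_ne_zero
          linear_combination h3
        have f1 : h10 = a₁*h00 + a₂*h01 := by
          apply mul_left_cancel₀ hDne
          linear_combination h00*hU2 - (a₂*h01)*hVD
        have f2 : h11 = -h00 := by
          apply mul_left_cancel₀ hDne
          linear_combination h00*hVD + h01*hU2 + (a₁*h01)*hVD
        have hQP : Q = !![a₁, a₂; -1, 0] * P := by
          rw [hQdef, hPdef]
          ext i j
          fin_cases i <;> fin_cases j <;>
            simp [Matrix.mul_apply, Fin.sum_univ_two, f1, f2] <;> ring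
        have hX1C : X1 * !![a₁, a₂; -1, 0] = (a₁ • 1 - Ct) * X1 := by
          rw [hX1def, hCtdef]
          ext i j
          fin_cases i <;> fin_cases j <;>
            simp [Matrix.mul_apply, Fin.sum_univ_two, Matrix.one_apply] <;> ring
        have E5 : Ct * G1 * X1 * P = (a₁ • G1 - G1 * Ct) * X1 * P := by
          have hE := E
          rw [hQP] at hE
          calc Ct * G1 * X1 * P = Ct * (G1 * (X1 * P)) := by simp only [Matrix.mul_assoc]
            _ = G1 * (X1 * (!![a₁, a₂; -1, 0] * P)) := hE
            _ = G1 * ((X1 * !![a₁, a₂; -1, 0]) * P) := by simp only [Matrix.mul_assoc]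
            _ = G1 * (((a₁ • 1 - Ct) * X1) * P) := by rw [hX1C]
            _ = (G1 * (a₁ • 1 - Ct)) * X1 * P := by simp only [Matrix.mul_assoc]
            _ = (a₁ • G1 - G1 * Ct) * X1 * P := by
                rw [Matrix.mul_sub, Matrix.mul_smul, mul_one]
        have E6 : Ct * G1 = a₁ • G1 - G1 * Ct :=
          mul_cancel_right_isUnit hX1unit (mul_cancel_right_isUnit hPunit E5)
        have htt : taup a₁ * taup a₁ = (1 : Matrix (Fin 2) (Fin 2) k) := by
          ext i j
          fin_cases i <;> fin_cases j <;>
            simp [taup, Matrix.mul_apply, Fin.sum_univ_two, Matrix.one_apply]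
        have hCtτ : Ct * taup a₁ = a₁ • taup a₁ - taup a₁ * Ct := by
          rw [hCtdef]
          ext i j
          fin_cases i <;> fin_cases j <;>
            simp [taup, Matrix.mul_apply, Fin.sum_univ_two] <;> ring
        have hHC : (taup a₁ * G1) * Ct = Ct * (taup a₁ * G1) := by
          have : Ct * (taup a₁ * G1) = taup a₁ * (G1 * Ct) := by
            calc Ct * (taup a₁ * G1) = (Ct * taup a₁) * G1 := by
                  simp only [Matrix.mul_assoc]
              _ = (a₁ • taup a₁ - taup a₁ * Ct) * G1 := by rw [hCtτ]
              _ = a₁ • (taup a₁ * G1) - taup a₁ * (Ct * G1) := by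
                  rw [Matrix.sub_mul, Matrix.smul_mul, Matrix.mul_assoc]
              _ = a₁ • (taup a₁ * G1) - taup a₁ * (a₁ • G1 - G1 * Ct) := by rw [E6]
              _ = taup a₁ * (G1 * Ct) := by
                  rw [Matrix.mul_sub, Matrix.mul_smul]; abel
          rw [this, Matrix.mul_assoc]
        have hHA : taup a₁ * G1
            = Ap a₁ a₂ ((taup a₁ * G1) 0 0) (-((taup a₁ * G1) 0 1)) := by
          apply comm_to_Ap
          rw [← hCtdef]
          exact hHC
        set c1 := (taup a₁ * G1) 0 0
        set d1 := -((taup a₁ * G1) 0 1)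
        have hG1τ : G1 = taup a₁ * Ap a₁ a₂ c1 d1 := by
          rw [← hHA, ← Matrix.mul_assoc, htt, one_mul]
        have hτdet : (taup a₁).det = -1 := by simp [taup]
        have uA1 : IsUnit (Ap a₁ a₂ c1 d1).det := by
          rw [← hHA, Matrix.det_mul, hτdet]
          exact isUnit_one.neg.mul u1d
        have hPA : P = -((Ap a₁ a₂ (-h00) h01)ᵀ) := by
          rw [Ap_transpose, hPdef]
          ext i j
          fin_cases i <;> fin_cases j <;> simp <;> ring
        have hτX1 : (taup a₁ * X1) * (taup a₁)ᵀ = -X1 := by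
          rw [hX1def, taup_transpose]
          ext i j
          fin_cases i <;> fin_cases j <;>
            simp [taup, Matrix.mul_apply, Fin.sum_univ_two] <;> ring
        have eq1' : (taup a₁ * Ap a₁ a₂ c1 d1) * (X1 * (Ap a₁ a₂ (-h00) h01)ᵀ) * G2ᵀ
            = -X1 := by
          have : G1 * (X1 * P) * G2ᵀ = X1 := eq1
          rw [hG1τ, hPA] at this
          have h4 : (taup a₁ * Ap a₁ a₂ c1 d1) * (X1 * -((Ap a₁ a₂ (-h00) h01)ᵀ)) * G2ᵀ
              = -((taup a₁ * Ap a₁ a₂ c1 d1) * (X1 * (Ap a₁ a₂ (-h00) h01)ᵀ) * G2ᵀ) := by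
            simp [Matrix.mul_neg, Matrix.neg_mul]
          rw [h4] at this
          linear_combination (norm := module) -this
        have e8 : (taup a₁ * X1) * ((Ap a₁ a₂ c1 d1)ᵀ * ((Ap a₁ a₂ (-h00) h01)ᵀ * G2ᵀ))
            = (taup a₁ * X1) * (taup a₁)ᵀ := by
          rw [hτX1]
          calc (taup a₁ * X1) * ((Ap a₁ a₂ c1 d1)ᵀ * ((Ap a₁ a₂ (-h00) h01)ᵀ * G2ᵀ))
              = taup a₁ * ((X1 * (Ap a₁ a₂ c1 d1)ᵀ) * ((Ap a₁ a₂ (-h00) h01)ᵀ * G2ᵀ)) := by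
                simp only [Matrix.mul_assoc]
            _ = taup a₁ * ((Ap a₁ a₂ c1 d1 * X1) * ((Ap a₁ a₂ (-h00) h01)ᵀ * G2ᵀ)) := by
                rw [hX1def, ← Ap_mul_X1]
            _ = (taup a₁ * Ap a₁ a₂ c1 d1) * (X1 * (Ap a₁ a₂ (-h00) h01)ᵀ) * G2ᵀ := by
                simp only [Matrix.mul_assoc]
            _ = -X1 := eq1'
        have hτX1unit : IsUnit (taup a₁ * X1).det := by
          rw [Matrix.det_mul, hτdet, hX1det]
          norm_num
        have e9 := mul_cancel_left_isUnit hτX1unit e8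
        have hfinτ : G2 * (Ap a₁ a₂ (-h00) h01 * Ap a₁ a₂ c1 d1) = taup a₁ := by
          have := congrArg Matrix.transpose e9
          simpa [Matrix.transpose_mul, Matrix.transpose_transpose, Matrix.mul_assoc]
            using this
        have hK : (taup a₁ * G2) * (Ap a₁ a₂ (-h00) h01 * Ap a₁ a₂ c1 d1) = 1 := by
          rw [Matrix.mul_assoc, hfinτ]
          exact htt
        obtain ⟨c2, d2, hKA, uA2, hrel⟩ := key_final uA1 hK
        have hG2τ : G2 = taup a₁ * Ap a₁ a₂ c2 d2 := by
          rw [← hKA, ← Matrix.mul_assoc, htt, one_mul]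
        right
        refine ⟨c1, d1, c2, d2, -h00, h01, uA1, uA2, hG1τ, hG2τ, ?_, hrel⟩
        ext i j
        fin_cases i <;> fin_cases j <;>
          simp [Ap, taup, Matrix.mul_apply, Fin.sum_univ_two]
        · rfl
        · rfl
        · exact f1
        · exact f2
    · rintro (⟨c₁,d₁,c₂,d₂,c₃,d₃,u1,u2,h1,h2,h3,hrel⟩ | ⟨c₁,d₁,c₂,d₂,c₃,d₃,u1,u2,h1,h2,h3,hrel⟩)
      · have hY := rel_to_one u1 u2 hrel
        simp only [actV, wp, h1, h2, h3, Prod.mk.injEq]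
        constructor
        · rw [stab_S1, hY, Matrix.transpose_one, mul_one]
        · rw [stab_S2, hY, Matrix.transpose_one, mul_one]
      · have hY := rel_to_one u1 u2 hrel
        simp only [actV, wp, h1, h2, h3, Prod.mk.injEq]
        constructor
        · rw [stab_T1, hY, Matrix.transpose_one, mul_one, taup_conj_X1 a₁ a₂]
        · rw [stab_T2, hY, Matrix.transpose_one, mul_one, taup_conj_X2 a₁ a₂]
  · rw [Set.disjoint_left]
    rintro g ⟨c₁,d₁,_,_,_,_,u1,_,h1,_⟩ ⟨e₁,f₁,_,_,_,_,_,_,h1',_⟩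
    have heq : Ap a₁ a₂ c₁ d₁ = taup a₁ * Ap a₁ a₂ e₁ f₁ := by rw [← h1, h1']
    have E00 : (Ap a₁ a₂ c₁ d₁) 0 0 = (taup a₁ * Ap a₁ a₂ e₁ f₁) 0 0 := by rw [heq]
    have E01 : (Ap a₁ a₂ c₁ d₁) 0 1 = (taup a₁ * Ap a₁ a₂ e₁ f₁) 0 1 := by rw [heq]
    have E10 : (Ap a₁ a₂ c₁ d₁) 1 0 = (taup a₁ * Ap a₁ a₂ e₁ f₁) 1 0 := by rw [heq]
    have E11 : (Ap a₁ a₂ c₁ d₁) 1 1 = (taup a₁ * Ap a₁ a₂ e₁ f₁) 1 1 := by rw [heq]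
    simp [Ap, taup, Matrix.mul_apply, Fin.sum_univ_two] at E00 E01 E10 E11
    have q1 : 2*c₁ - a₁*d₁ = 0 := by linear_combination E00 + E11
    have q2 : 2*a₂*d₁ - a₁*c₁ = 0 := by linear_combination E10 - a₂ * E01 - a₁ * E00
    have hd : d₁ * (a₁^2 - 4*a₂) = 0 := by linear_combination (-a₁)*q1 - 2*q2
    have hd0 : d₁ = 0 := (mul_eq_zero.mp hd).resolve_right hp
    have hc0 : c₁ = 0 := by
      have h2 : (2:k) * c₁ = 0 := by linear_combination q1 + a₁ * hd0
      exact (mul_eq_zero.mp h2).resolve_left two_ne_zero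
    rw [hc0, hd0] at u1
    simp [Ap, Matrix.det_fin_two_of] at u1
end

section
/- Filtering process limit theorem (abstract form of the paper's Theorem on the mean value, Theorem 5.8): Let I be a set, N : I → ℕ with N(x) ≥ 1 for all x and with {x ∈ I : N(x) = m} finite for every m, and 𝔠 : I → ℝ with 𝔠(x) ≥ 0. Suppose that for each t ∈ ℕ there are functions a_t : I × ℕ_{≥1} → ℝ and ℓ_t : ℕ_{≥1} → ℝ such that: (i) 0 ≤ a_t(x,n) ≤ ℓ_t(n) for all x, n, and a_t(x,1) = 1 = ℓ_t(1); (ii) Λ_t := Σ_{n=1}^∞ ℓ_t(n)·n^{-2} converges, and Λ_t → 1 as t → ∞; (iii) for each t there is a real 𝓛_t such that X^{-2} · Σ_{(x,n) : N(x)·n ≤ X} 𝔠(x)·a_t(x,n) → 𝓛_t as the real number X → ∞, and 𝓛_t → 𝓛 as t → ∞. Then X^{-2} · Σ_{x : N(x) ≤ X} 𝔠(x) → 𝓛 as X → ∞. -/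
open Filter Topology Finset

section FilteringAux

variable {I : Type*}

theorem finA (N : I → ℕ) (hNfin : ∀ m : ℕ, {x : I | N x = m}.Finite) (X : ℝ) :
    ({x : I | ((N x : ℕ) : ℝ) ≤ X}).Finite := by
  apply Set.Finite.subset (Set.Finite.biUnion (Finset.range (⌊X⌋₊ + 1)).finite_toSet
    fun m _ => hNfin m)
  intro x hx
  simp only [Set.mem_iUnion, Finset.mem_coe, Finset.mem_range, Set.mem_setOf_eq]
  exact ⟨N x, Nat.lt_succ_of_le (Nat.le_floor hx), rfl⟩

theorem finP (N : I → ℕ) (hN1 : ∀ x, 1 ≤ N x)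
    (hNfin : ∀ m : ℕ, {x : I | N x = m}.Finite) (X : ℝ) :
    ({p : I × ℕ | 1 ≤ p.2 ∧ ((N p.1 * p.2 : ℕ) : ℝ) ≤ X}).Finite := by
  apply Set.Finite.subset (Set.Finite.prod (finA N hNfin X) (Set.finite_Iic (⌊X⌋₊)))
  rintro ⟨x, n⟩ ⟨hn, hxn⟩
  have h1 : N x ≤ N x * n := le_mul_of_one_le_right (Nat.zero_le _) hn
  have h2 : n ≤ N x * n := le_mul_of_one_le_left (Nat.zero_le _) (hN1 x)
  constructor
  · exact le_trans (Nat.cast_le.mpr h1) hxn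
  · exact Nat.le_floor (le_trans (Nat.cast_le.mpr h2) hxn)

noncomputable def SF (N : I → ℕ) (hNfin : ∀ m : ℕ, {x : I | N x = m}.Finite) (X : ℝ) :
    Finset I := (finA N hNfin X).toFinset

noncomputable def PF (N : I → ℕ) (hN1 : ∀ x, 1 ≤ N x)
    (hNfin : ∀ m : ℕ, {x : I | N x = m}.Finite) (X : ℝ) : Finset (I × ℕ) :=
  (finP N hN1 hNfin X).toFinset

theorem mem_SF {N : I → ℕ} {hNfin : ∀ m : ℕ, {x : I | N x = m}.Finite} {X : ℝ} {x : I} :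
    x ∈ SF N hNfin X ↔ ((N x : ℕ) : ℝ) ≤ X := by
  simp [SF, Set.Finite.mem_toFinset]

theorem mem_PF {N : I → ℕ} {hN1 : ∀ x, 1 ≤ N x}
    {hNfin : ∀ m : ℕ, {x : I | N x = m}.Finite} {X : ℝ} {p : I × ℕ} :
    p ∈ PF N hN1 hNfin X ↔ 1 ≤ p.2 ∧ ((N p.1 * p.2 : ℕ) : ℝ) ≤ X := by
  simp [PF, Set.Finite.mem_toFinset]

noncomputable def SS (N : I → ℕ) (hNfin : ∀ m : ℕ, {x : I | N x = m}.Finite)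
    (c : I → ℝ) (X : ℝ) : ℝ := ∑ x ∈ SF N hNfin X, c x

noncomputable def TT (N : I → ℕ) (hN1 : ∀ x, 1 ≤ N x)
    (hNfin : ∀ m : ℕ, {x : I | N x = m}.Finite) (c : I → ℝ) (b : I → ℕ → ℝ) (X : ℝ) : ℝ :=
  ∑ p ∈ PF N hN1 hNfin X, c p.1 * b p.1 p.2

theorem SS_eq_finsum (N : I → ℕ) (hNfin : ∀ m : ℕ, {x : I | N x = m}.Finite)
    (c : I → ℝ) (X : ℝ) :
    (∑ᶠ x ∈ {x : I | ((N x : ℕ) : ℝ) ≤ X}, c x) = SS N hNfin c X :=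
  finsum_mem_eq_finite_toFinset_sum _ (finA N hNfin X)

theorem TT_eq_finsum (N : I → ℕ) (hN1 : ∀ x, 1 ≤ N x)
    (hNfin : ∀ m : ℕ, {x : I | N x = m}.Finite) (c : I → ℝ) (b : I → ℕ → ℝ) (X : ℝ) :
    (∑ᶠ p ∈ {p : I × ℕ | 1 ≤ p.2 ∧ ((N p.1 * p.2 : ℕ) : ℝ) ≤ X}, c p.1 * b p.1 p.2) =
      TT N hN1 hNfin c b X :=
  finsum_mem_eq_finite_toFinset_sum _ (finP N hN1 hNfin X)

theorem SS_nonneg (N : I → ℕ) (hNfin : ∀ m : ℕ, {x : I | N x = m}.Finite)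
    (c : I → ℝ) (hc : ∀ x, 0 ≤ c x) (X : ℝ) : 0 ≤ SS N hNfin c X :=
  Finset.sum_nonneg fun x _ => hc x

theorem SS_mono (N : I → ℕ) (hNfin : ∀ m : ℕ, {x : I | N x = m}.Finite)
    (c : I → ℝ) (hc : ∀ x, 0 ≤ c x) {X Y : ℝ} (hXY : X ≤ Y) :
    SS N hNfin c X ≤ SS N hNfin c Y := by
  apply Finset.sum_le_sum_of_subset_of_nonneg
  · intro x hx
    rw [mem_SF] at hx ⊢
    exact hx.trans hXY
  · exact fun x _ _ => hc x

theorem SS_eq_zero (N : I → ℕ) (hN1 : ∀ x, 1 ≤ N x)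
    (hNfin : ∀ m : ℕ, {x : I | N x = m}.Finite) (c : I → ℝ) {X : ℝ} (hX : X < 1) :
    SS N hNfin c X = 0 := by
  have : SF N hNfin X = ∅ := by
    apply Finset.eq_empty_of_forall_notMem
    intro x hx
    rw [mem_SF] at hx
    have h1 : (1 : ℝ) ≤ ((N x : ℕ) : ℝ) := by exact_mod_cast hN1 x
    linarith
  simp [SS, this]

theorem SS_le_TT (N : I → ℕ) (hN1 : ∀ x, 1 ≤ N x)
    (hNfin : ∀ m : ℕ, {x : I | N x = m}.Finite) (c : I → ℝ) (hc : ∀ x, 0 ≤ c x)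
    (b : I → ℕ → ℝ) (hb0 : ∀ x n, 1 ≤ n → 0 ≤ b x n) (hb1 : ∀ x, b x 1 = 1) (X : ℝ) :
    SS N hNfin c X ≤ TT N hN1 hNfin c b X := by
  classical
  have hinj : ∀ x ∈ SF N hNfin X, ∀ y ∈ SF N hNfin X,
      (fun x => (x, 1)) x = (fun x => (x, 1)) y → x = y := by
    intro x _ y _ h
    exact congrArg Prod.fst h
  calc SS N hNfin c X = ∑ x ∈ SF N hNfin X, c x * b x 1 := by
        simp [SS, hb1]
    _ = ∑ p ∈ (SF N hNfin X).image (fun x => (x, 1)), c p.1 * b p.1 p.2 :=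
        (Finset.sum_image (f := fun p : I × ℕ => c p.1 * b p.1 p.2) hinj).symm
    _ ≤ TT N hN1 hNfin c b X := by
        apply Finset.sum_le_sum_of_subset_of_nonneg
        · intro p hp
          simp only [Finset.mem_image] at hp
          obtain ⟨x, hx, rfl⟩ := hp
          rw [mem_PF]
          exact ⟨le_refl 1, by simpa using mem_SF.mp hx⟩
        · intro p hp _
          exact mul_nonneg (hc _) (hb0 _ _ (mem_PF.mp hp).1)

theorem tail_bound (l : ℕ → ℝ) (hl : ∀ n, 1 ≤ n → 0 ≤ l n) (hl1 : l 1 = 1) (Λ : ℝ)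
    (hΛ : HasSum (fun n : ℕ => l (n + 1) / ((n + 1 : ℝ)) ^ 2) Λ) (M : ℕ) :
    ∑ n ∈ Finset.Icc 2 M, l n / (n : ℝ) ^ 2 ≤ Λ - 1 := by
  classical
  set g : ℕ → ℝ := fun n => l (n + 1) / ((n + 1 : ℝ)) ^ 2 with hg
  have hg0 : ∀ n, 0 ≤ g n := by
    intro n
    apply div_nonneg (hl _ (Nat.succ_le_succ (Nat.zero_le _)))
    positivity
  have key : ∑ k ∈ insert 0 ((Finset.Icc 2 M).image (· - 1)), g k ≤ Λ :=
    sum_le_hasSum _ (fun n _ => hg0 n) hΛ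
  have h0 : (0 : ℕ) ∉ (Finset.Icc 2 M).image (· - 1) := by
    simp only [Finset.mem_image, Finset.mem_Icc, not_exists]
    rintro n ⟨⟨h2, _⟩, h⟩
    omega
  rw [Finset.sum_insert h0] at key
  have hginj : ∀ x ∈ Finset.Icc 2 M, ∀ y ∈ Finset.Icc 2 M, x - 1 = y - 1 → x = y := by
    intro x hx y hy h
    simp only [Finset.mem_Icc] at hx hy
    omega
  rw [Finset.sum_image hginj] at key
  have himg : ∑ n ∈ Finset.Icc 2 M, g (n - 1) = ∑ n ∈ Finset.Icc 2 M, l n / (n : ℝ) ^ 2 := by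
    apply Finset.sum_congr rfl
    intro n hn
    simp only [Finset.mem_Icc] at hn
    have hn1 : n - 1 + 1 = n := by omega
    rw [hg]
    simp only
    rw [show ((n - 1 : ℕ) : ℝ) + 1 = (n : ℝ) by exact_mod_cast hn1, hn1]
  have hg0' : g 0 = 1 := by simp [hg, hl1]
  rw [himg, hg0'] at key
  linarith

theorem TT_le (N : I → ℕ) (hN1 : ∀ x, 1 ≤ N x)
    (hNfin : ∀ m : ℕ, {x : I | N x = m}.Finite) (c : I → ℝ) (hc : ∀ x, 0 ≤ c x)
    (b : I → ℕ → ℝ) (l : ℕ → ℝ) (hbl : ∀ x n, 1 ≤ n → b x n ≤ l n)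
    (hb1 : ∀ x, b x 1 = 1) (X : ℝ) :
    TT N hN1 hNfin c b X ≤
      SS N hNfin c X + ∑ n ∈ Finset.Icc 2 ⌊X⌋₊, l n * SS N hNfin c (X / n) := by
  classical
  rw [TT, ← Finset.sum_filter_add_sum_filter_not (PF N hN1 hNfin X) (fun p => p.2 = 1)]
  apply add_le_add
  · -- first part equals SS
    have himg : (PF N hN1 hNfin X).filter (fun p => p.2 = 1) =
        (SF N hNfin X).image (fun x => (x, 1)) := by
      ext ⟨x, n⟩
      simp only [Finset.mem_filter, mem_PF, Finset.mem_image, mem_SF, Prod.mk.injEq]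
      constructor
      · rintro ⟨⟨h1, h2⟩, rfl⟩
        exact ⟨x, by simpa using h2, rfl, rfl⟩
      · rintro ⟨y, hy, rfl, rfl⟩
        exact ⟨⟨le_refl 1, by simpa using hy⟩, rfl⟩
    have hinj : ∀ x ∈ SF N hNfin X, ∀ y ∈ SF N hNfin X,
        (fun x => (x, 1)) x = (fun x => (x, 1)) y → x = y := by
      intro x _ y _ h
      exact congrArg Prod.fst h
    rw [himg, Finset.sum_image (f := fun p : I × ℕ => c p.1 * b p.1 p.2) hinj]
    apply le_of_eq
    simp [SS, hb1]
  · -- second part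
    have step1 : ∑ p ∈ (PF N hN1 hNfin X).filter (fun p => ¬p.2 = 1), c p.1 * b p.1 p.2 ≤
        ∑ p ∈ (PF N hN1 hNfin X).filter (fun p => ¬p.2 = 1), c p.1 * l p.2 := by
      apply Finset.sum_le_sum
      intro p hp
      simp only [Finset.mem_filter, mem_PF] at hp
      exact mul_le_mul_of_nonneg_left (hbl _ _ hp.1.1) (hc _)
    refine step1.trans ?_
    have hmaps : ∀ p ∈ (PF N hN1 hNfin X).filter (fun p => ¬p.2 = 1),
        p.2 ∈ Finset.Icc 2 ⌊X⌋₊ := by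
      intro p hp
      simp only [Finset.mem_filter, mem_PF] at hp
      obtain ⟨⟨h1, h2⟩, h3⟩ := hp
      have hle : p.2 ≤ N p.1 * p.2 := le_mul_of_one_le_left (Nat.zero_le _) (hN1 p.1)
      have : (p.2 : ℝ) ≤ X := le_trans (Nat.cast_le.mpr hle) h2
      simp only [Finset.mem_Icc]
      exact ⟨by omega, Nat.le_floor this⟩
    rw [← Finset.sum_fiberwise_of_maps_to hmaps (fun p => c p.1 * l p.2)]
    apply Finset.sum_le_sum
    intro n hn
    simp only [Finset.mem_Icc] at hn
    have hnn : 0 < n := by omega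
    have hn0 : (0 : ℝ) < (n : ℝ) := by exact_mod_cast hnn
    have hset : ((PF N hN1 hNfin X).filter (fun p => ¬p.2 = 1)).filter (fun p => p.2 = n) =
        (SF N hNfin (X / n)).image (fun x => (x, n)) := by
      ext ⟨x, m⟩
      simp only [Finset.mem_filter, mem_PF, Finset.mem_image, mem_SF, Prod.mk.injEq]
      constructor
      · rintro ⟨⟨⟨h1, h2⟩, h3⟩, rfl⟩
        refine ⟨x, ?_, rfl, rfl⟩
        rw [le_div_iff₀ hn0]
        calc ((N x : ℕ) : ℝ) * m = ((N x * m : ℕ) : ℝ) := by push_cast; ring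
          _ ≤ X := h2
      · rintro ⟨y, hy, rfl, rfl⟩
        rw [le_div_iff₀ hn0] at hy
        refine ⟨⟨⟨by omega, ?_⟩, by omega⟩, rfl⟩
        push_cast
        exact hy
    have hinj : ∀ x ∈ SF N hNfin (X / n), ∀ y ∈ SF N hNfin (X / n),
        (fun x => (x, n)) x = (fun x => (x, n)) y → x = y := by
      intro x _ y _ h
      exact congrArg Prod.fst h
    rw [hset, Finset.sum_image (f := fun p : I × ℕ => c p.1 * l p.2) hinj]
    apply le_of_eq
    rw [SS, Finset.mul_sum]
    apply Finset.sum_congr rfl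
    intro x _
    ring

end FilteringAux

/-- **Filtering process limit theorem** (abstract form of the paper's mean value theorem,
Theorem 5.8). -/
theorem filtering_process_limit {I : Type*} (N : I → ℕ)
    (hN1 : ∀ x, 1 ≤ N x) (hNfin : ∀ m : ℕ, {x : I | N x = m}.Finite)
    (c : I → ℝ) (hc : ∀ x, 0 ≤ c x)
    (a : ℕ → I → ℕ → ℝ) (l : ℕ → ℕ → ℝ)
    (ha_nonneg : ∀ t x n, 1 ≤ n → 0 ≤ a t x n)
    (ha_le : ∀ t x n, 1 ≤ n → a t x n ≤ l t n)
    (ha_one : ∀ t x, a t x 1 = 1) (hl_one : ∀ t, l t 1 = 1)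
    (Λ : ℕ → ℝ)
    (hΛ : ∀ t, HasSum (fun n : ℕ => l t (n + 1) / ((n + 1 : ℝ)) ^ 2) (Λ t))
    (hΛ1 : Tendsto Λ atTop (𝓝 1))
    (𝓛 : ℕ → ℝ) (𝓛lim : ℝ)
    (h𝓛 : ∀ t, Tendsto
      (fun X : ℝ => (X ^ 2)⁻¹ *
        ∑ᶠ p ∈ {p : I × ℕ | 1 ≤ p.2 ∧ ((N p.1 * p.2 : ℕ) : ℝ) ≤ X}, c p.1 * a t p.1 p.2)
      atTop (𝓝 (𝓛 t)))
    (h𝓛lim : Tendsto 𝓛 atTop (𝓝 𝓛lim)) :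
    Tendsto (fun X : ℝ => (X ^ 2)⁻¹ * ∑ᶠ x ∈ {x : I | ((N x : ℕ) : ℝ) ≤ X}, c x)
      atTop (𝓝 𝓛lim) := by
  classical
  rcases isEmpty_or_nonempty I with hI | hI
  · -- Degenerate case: `I` is empty, all sums vanish.
    have hset : ∀ X : ℝ, {x : I | ((N x : ℕ) : ℝ) ≤ X} = ∅ := fun X =>
      Set.eq_empty_of_isEmpty _
    have hset2 : ∀ X : ℝ,
        {p : I × ℕ | 1 ≤ p.2 ∧ ((N p.1 * p.2 : ℕ) : ℝ) ≤ X} = ∅ := fun X =>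
      Set.eq_empty_of_isEmpty _
    have h0 : ∀ t, 𝓛 t = 0 := by
      intro t
      refine tendsto_nhds_unique (h𝓛 t) ?_
      have : (fun X : ℝ => (X ^ 2)⁻¹ *
          ∑ᶠ p ∈ {p : I × ℕ | 1 ≤ p.2 ∧ ((N p.1 * p.2 : ℕ) : ℝ) ≤ X},
            c p.1 * a t p.1 p.2) = fun _ => (0 : ℝ) := by
        funext X
        rw [hset2, finsum_mem_empty, mul_zero]
      rw [this]
      exact tendsto_const_nhds
    have hlim0 : 𝓛lim = 0 := by
      refine tendsto_nhds_unique h𝓛lim ?_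
      have : 𝓛 = fun _ => (0 : ℝ) := funext h0
      rw [this]
      exact tendsto_const_nhds
    have : (fun X : ℝ => (X ^ 2)⁻¹ * ∑ᶠ x ∈ {x : I | ((N x : ℕ) : ℝ) ≤ X}, c x) =
        fun _ => (0 : ℝ) := by
      funext X
      rw [hset, finsum_mem_empty, mul_zero]
    rw [this, hlim0]
    exact tendsto_const_nhds
  · obtain ⟨x₀⟩ := hI
    have hl0 : ∀ t n, 1 ≤ n → 0 ≤ l t n := fun t n hn =>
      le_trans (ha_nonneg t x₀ n hn) (ha_le t x₀ n hn)
    -- switch to finite sums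
    simp only [SS_eq_finsum N hNfin c]
    have h𝓛' : ∀ t, Tendsto (fun X : ℝ => (X ^ 2)⁻¹ * TT N hN1 hNfin c (a t) X)
        atTop (𝓝 (𝓛 t)) := by
      intro t
      refine (h𝓛 t).congr fun X => ?_
      rw [TT_eq_finsum]
    -- a uniform quadratic bound on `SS`
    obtain ⟨X₀', hX₀'⟩ := eventually_atTop.mp
      ((h𝓛' 0).eventually_lt_const (lt_add_one (𝓛 0)))
    set X₀ : ℝ := max X₀' 1 with hX₀def
    have hX₀1 : (1 : ℝ) ≤ X₀ := le_max_right _ _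
    have hX₀ : ∀ X : ℝ, X₀ ≤ X → TT N hN1 hNfin c (a 0) X ≤ (𝓛 0 + 1) * X ^ 2 := by
      intro X hX
      have h1 : (1 : ℝ) ≤ X := le_trans hX₀1 hX
      have hlt := hX₀' X (le_trans (le_max_left _ _) hX)
      have hX2 : (0 : ℝ) < X ^ 2 := by positivity
      have := mul_lt_mul_of_pos_left hlt hX2
      rw [← mul_assoc, mul_inv_cancel₀ hX2.ne', one_mul] at this
      nlinarith
    set C : ℝ := max (𝓛 0 + 1) 0 * X₀ ^ 2 with hCdef
    have hC0 : 0 ≤ C := mul_nonneg (le_max_right _ _) (sq_nonneg _)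
    have hSC : ∀ Y : ℝ, SS N hNfin c Y ≤ C * Y ^ 2 := by
      intro Y
      rcases lt_or_ge Y 1 with hY | hY
      · rw [SS_eq_zero N hN1 hNfin c hY]
        positivity
      · have hY0 : (0 : ℝ) < Y := lt_of_lt_of_le one_pos hY
        have hmax : (𝓛 0 + 1) ≤ max (𝓛 0 + 1) 0 := le_max_left _ _
        rcases le_total X₀ Y with h | h
        · calc SS N hNfin c Y ≤ TT N hN1 hNfin c (a 0) Y :=
                SS_le_TT N hN1 hNfin c hc (a 0) (ha_nonneg 0) (ha_one 0) Y
            _ ≤ (𝓛 0 + 1) * Y ^ 2 := hX₀ Y h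
            _ ≤ C * Y ^ 2 := by
                have hX₀sq : (1 : ℝ) ≤ X₀ ^ 2 := by nlinarith
                have h1 : max (𝓛 0 + 1) 0 ≤ C := by nlinarith [le_max_right (𝓛 0 + 1) (0:ℝ)]
                nlinarith [sq_nonneg Y, le_max_right (𝓛 0 + 1) (0:ℝ)]
        · calc SS N hNfin c Y ≤ SS N hNfin c X₀ := SS_mono N hNfin c hc h
            _ ≤ TT N hN1 hNfin c (a 0) X₀ :=
                SS_le_TT N hN1 hNfin c hc (a 0) (ha_nonneg 0) (ha_one 0) X₀
            _ ≤ (𝓛 0 + 1) * X₀ ^ 2 := hX₀ X₀ le_rfl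
            _ ≤ C := by nlinarith [sq_nonneg X₀]
            _ ≤ C * Y ^ 2 := by nlinarith [mul_nonneg hC0 (by nlinarith : (0:ℝ) ≤ Y ^ 2 - 1)]
    -- the key comparison
    have key : ∀ (t : ℕ) (X : ℝ),
        TT N hN1 hNfin c (a t) X ≤ SS N hNfin c X + C * X ^ 2 * (Λ t - 1) := by
      intro t X
      have h1 := TT_le N hN1 hNfin c hc (a t) (l t) (ha_le t) (ha_one t) X
      have h2 : ∑ n ∈ Finset.Icc 2 ⌊X⌋₊, l t n * SS N hNfin c (X / n) ≤
          C * X ^ 2 * (Λ t - 1) := by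
        calc ∑ n ∈ Finset.Icc 2 ⌊X⌋₊, l t n * SS N hNfin c (X / n)
            ≤ ∑ n ∈ Finset.Icc 2 ⌊X⌋₊, C * X ^ 2 * (l t n / (n : ℝ) ^ 2) := by
              apply Finset.sum_le_sum
              intro n hn
              simp only [Finset.mem_Icc] at hn
              have hnn : 0 < n := by omega
              have hn0 : (0 : ℝ) < (n : ℝ) := by exact_mod_cast hnn
              calc l t n * SS N hNfin c (X / n)
                  ≤ l t n * (C * (X / n) ^ 2) :=
                    mul_le_mul_of_nonneg_left (hSC _) (hl0 t n (by omega))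
                _ = C * X ^ 2 * (l t n / (n : ℝ) ^ 2) := by
                    field_simp
          _ = C * X ^ 2 * ∑ n ∈ Finset.Icc 2 ⌊X⌋₊, l t n / (n : ℝ) ^ 2 :=
              (Finset.mul_sum _ _ _).symm
          _ ≤ C * X ^ 2 * (Λ t - 1) := by
              apply mul_le_mul_of_nonneg_left
                (tail_bound (l t) (hl0 t) (hl_one t) (Λ t) (hΛ t) ⌊X⌋₊)
              positivity
      linarith
    -- epsilon argument
    rw [Metric.tendsto_atTop] at h𝓛lim hΛ1 ⊢
    intro ε hε
    obtain ⟨t₁, ht₁⟩ := h𝓛lim (ε / 3) (by linarith)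
    obtain ⟨t₂, ht₂⟩ := hΛ1 (ε / (3 * (C + 1))) (by positivity)
    set t : ℕ := max t₁ t₂ with htdef
    have hLt : |𝓛 t - 𝓛lim| < ε / 3 := by
      have := ht₁ t (le_max_left _ _)
      rwa [Real.dist_eq] at this
    have hΛt : |Λ t - 1| < ε / (3 * (C + 1)) := by
      have := ht₂ t (le_max_right _ _)
      rwa [Real.dist_eq] at this
    obtain ⟨X₁, hX₁⟩ := Metric.tendsto_atTop.mp (h𝓛' t) (ε / 3) (by linarith)
    refine ⟨max X₁ 1, fun X hX => ?_⟩
    have hXX₁ : X₁ ≤ X := le_trans (le_max_left _ _) hX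
    have hXge1 : (1 : ℝ) ≤ X := le_trans (le_max_right _ _) hX
    have hX2 : (0 : ℝ) < X ^ 2 := by positivity
    rw [Real.dist_eq]
    have hd2 : |(X ^ 2)⁻¹ * TT N hN1 hNfin c (a t) X - 𝓛 t| < ε / 3 := by
      have := hX₁ X hXX₁
      rwa [Real.dist_eq] at this
    have hST : SS N hNfin c X ≤ TT N hN1 hNfin c (a t) X :=
      SS_le_TT N hN1 hNfin c hc (a t) (ha_nonneg t) (ha_one t) X
    have hTS := key t X
    have hd1 : |(X ^ 2)⁻¹ * SS N hNfin c X - (X ^ 2)⁻¹ * TT N hN1 hNfin c (a t) X| ≤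
        C * (Λ t - 1) := by
      rw [abs_sub_comm, ← mul_sub, abs_mul, abs_of_pos (inv_pos.mpr hX2),
        abs_of_nonneg (by linarith : (0:ℝ) ≤ TT N hN1 hNfin c (a t) X - SS N hNfin c X)]
      calc (X ^ 2)⁻¹ * (TT N hN1 hNfin c (a t) X - SS N hNfin c X)
          ≤ (X ^ 2)⁻¹ * (C * X ^ 2 * (Λ t - 1)) :=
            mul_le_mul_of_nonneg_left (by linarith) (inv_nonneg.mpr hX2.le)
        _ = C * (Λ t - 1) := by
            field_simp
    have hd1' : C * (Λ t - 1) < ε / 3 := by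
      have h1 : C * (Λ t - 1) ≤ C * |Λ t - 1| :=
        mul_le_mul_of_nonneg_left (le_abs_self _) hC0
      have h2 : C * |Λ t - 1| ≤ (C + 1) * |Λ t - 1| := by
        nlinarith [abs_nonneg (Λ t - 1)]
      have h3 : (C + 1) * |Λ t - 1| < (C + 1) * (ε / (3 * (C + 1))) :=
        mul_lt_mul_of_pos_left hΛt (by linarith)
      have h4 : (C + 1) * (ε / (3 * (C + 1))) = ε / 3 := by
        field_simp
      linarith
    have tri1 : |(X ^ 2)⁻¹ * SS N hNfin c X - 𝓛lim| ≤
        |(X ^ 2)⁻¹ * SS N hNfin c X - (X ^ 2)⁻¹ * TT N hN1 hNfin c (a t) X| +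
          |(X ^ 2)⁻¹ * TT N hN1 hNfin c (a t) X - 𝓛lim| := abs_sub_le _ _ _
    have tri2 : |(X ^ 2)⁻¹ * TT N hN1 hNfin c (a t) X - 𝓛lim| ≤
        |(X ^ 2)⁻¹ * TT N hN1 hNfin c (a t) X - 𝓛 t| + |𝓛 t - 𝓛lim| := abs_sub_le _ _ _
    linarith
end

section
/- Let O be a discrete valuation ring with maximal ideal 𝔭, uniformizer π, and fraction field K, and let p(z) = z² + a₁z + a₂ ∈ O[z] be an Eisenstein polynomial. Let t ∈ K^×, u ∈ K, and i ∈ {0, 1}, and suppose that π^i t² ∈ O, that 2u + a₁ ∈ O, and that t^{-2} π^{-i} (u² + a₁u + a₂) ∈ O. Then t ∈ O^× and u ∈ O; moreover, if i = 1 then u ∈ 𝔭. -/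
open IsLocalRing

/-- Every nonzero element of the fraction field of a DVR can be written, after clearing a
power of the uniformizer, as a unit times a power of the uniformizer. -/
lemma eisenstein_aux_rep {O : Type*} [CommRing O] [IsDomain O] [IsDiscreteValuationRing O]
    {K : Type*} [Field K] [Algebra O K] [IsFractionRing O K]
    (π : O) (hπ : Irreducible π) (x : K) (hx : x ≠ 0) :
    ∃ (W : Oˣ) (m k : ℕ),
      x * (algebraMap O K π) ^ k = algebraMap O K (W : O) * (algebraMap O K π) ^ m := by
  obtain ⟨p, q, hq, hpq⟩ := IsFractionRing.div_surjective (A := O) x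
  have hq0 : q ≠ 0 := nonZeroDivisors.ne_zero hq
  have hfq : algebraMap O K q ≠ 0 := by
    simpa using fun h => hq0 (IsFractionRing.injective O K (by simpa using h))
  have hp0 : p ≠ 0 := by
    rintro rfl
    simp only [map_zero, zero_div] at hpq
    exact hx hpq.symm
  obtain ⟨m, w1, hw1⟩ := IsDiscreteValuationRing.eq_unit_mul_pow_irreducible hp0 hπ
  obtain ⟨k, w2, hw2⟩ := IsDiscreteValuationRing.eq_unit_mul_pow_irreducible hq0 hπ
  refine ⟨w1 * w2⁻¹, m, k, ?_⟩
  have hEq : x * algebraMap O K q = algebraMap O K p := by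
    rw [← hpq, div_mul_cancel₀ _ hfq]
  rw [hw1, hw2] at hEq
  push_cast [map_mul, map_pow] at hEq ⊢
  have h2 : algebraMap O K (w2 : O) * algebraMap O K ((w2⁻¹ : Oˣ) : O) = 1 := by
    rw [← map_mul]; simp
  linear_combination (algebraMap O K ((w2⁻¹ : Oˣ) : O)) * hEq
    - (x * (algebraMap O K π) ^ k) * h2

/-- Lemma 7.6 of the paper ("ramlem"): let `O` be a discrete valuation ring with maximal
ideal `𝔭`, uniformizer `π` and fraction field `K`, and let `p(z) = z² + a₁z + a₂` be an
Eisenstein polynomial over `O`.  If `t ∈ K×`, `u ∈ K`, `i ∈ {0,1}` and the three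
coefficients `π^i t²`, `2u + a₁` and `t⁻²π⁻ⁱ(u² + a₁u + a₂)` all lie in `O`, then `t` is a
unit of `O` and `u ∈ O`; moreover if `i = 1` then `u ∈ 𝔭`. -/
theorem eisenstein_integrality {O : Type*} [CommRing O] [IsDomain O] [IsDiscreteValuationRing O]
    {K : Type*} [Field K] [Algebra O K] [IsFractionRing O K]
    (π : O) (hπ : Irreducible π)
    (a₁ a₂ : O) (ha₁ : a₁ ∈ maximalIdeal O) (ha₂ : a₂ ∈ maximalIdeal O)
    (ha₂' : a₂ ∉ (maximalIdeal O) ^ 2)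
    (t u : K) (ht : t ≠ 0) (i : ℕ) (hi : i = 0 ∨ i = 1)
    (hc₀ : ∃ x : O, algebraMap O K x = (algebraMap O K π) ^ i * t ^ 2)
    (hc₁ : ∃ x : O, algebraMap O K x = 2 * u + algebraMap O K a₁)
    (hc₂ : ∃ x : O, algebraMap O K x =
      (t ^ 2)⁻¹ * ((algebraMap O K π) ^ i)⁻¹ *
        (u ^ 2 + algebraMap O K a₁ * u + algebraMap O K a₂)) :
    (∃ x : O, IsUnit x ∧ algebraMap O K x = t) ∧
    (∃ x : O, algebraMap O K x = u) ∧
    (i = 1 → ∃ x ∈ maximalIdeal O, algebraMap O K x = u) := by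
    classical
  have hinj : Function.Injective (algebraMap O K) := IsFractionRing.injective O K
  have hπ0 : π ≠ 0 := hπ.ne_zero
  have hπK : algebraMap O K π ≠ 0 := by
    simpa using fun h => hπ0 (hinj (by simpa using h))
  have hprime : Prime π := UniqueFactorizationMonoid.irreducible_iff_prime.mp hπ
  have hmem : ∀ x : O, x ∈ maximalIdeal O ↔ π ∣ x := by
    intro x
    rw [hπ.maximalIdeal_eq, Ideal.mem_span_singleton]
  have hmem2 : ∀ x : O, x ∈ (maximalIdeal O) ^ 2 ↔ π ^ 2 ∣ x := by
    intro x
    rw [hπ.maximalIdeal_eq, Ideal.span_singleton_pow, Ideal.mem_span_singleton]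
  have hd₁ : π ∣ a₁ := (hmem a₁).mp ha₁
  have hd₂ : π ∣ a₂ := (hmem a₂).mp ha₂
  have hd₂' : ¬ π ^ 2 ∣ a₂ := fun h => ha₂' ((hmem2 a₂).mpr h)
  obtain ⟨r₀, hr₀⟩ := hc₀
  obtain ⟨r₂, hr₂⟩ := hc₂
  have hπKi : (algebraMap O K π) ^ i ≠ 0 := pow_ne_zero _ hπK
  have ht2 : t ^ 2 ≠ 0 := pow_ne_zero _ ht
  -- the quantity S = u² + a₁ u + a₂ is integral: S = r₀ * r₂
  have hSval : algebraMap O K r₀ * algebraMap O K r₂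
      = u ^ 2 + algebraMap O K a₁ * u + algebraMap O K a₂ := by
    rw [hr₀, hr₂]
    field_simp
  -- Step 1 : u is integral
  have hu : ∃ c : O, algebraMap O K c = u := by
    by_cases hu0 : u = 0
    · exact ⟨0, by simp [hu0]⟩
    obtain ⟨W, m, k, hW⟩ := eisenstein_aux_rep π hπ u hu0
    rcases le_or_gt k m with hkm | hmk
    · refine ⟨(W : O) * π ^ (m - k), ?_⟩
      apply mul_right_cancel₀ (pow_ne_zero k hπK)
      rw [map_mul, map_pow, mul_assoc, ← pow_add, Nat.sub_add_cancel hkm]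
      exact hW.symm
    · exfalso
      set e := k - m with he
      have he1 : 1 ≤ e := by omega
      have hWe : u * (algebraMap O K π) ^ e = algebraMap O K (W : O) := by
        apply mul_right_cancel₀ (pow_ne_zero m hπK)
        rw [mul_assoc, ← pow_add, show e + m = k by omega]
        exact hW
      have key : algebraMap O K ((W : O) ^ 2 + a₁ * (W : O) * π ^ e)
          = algebraMap O K ((r₀ * r₂ - a₂) * (π ^ e * π ^ e)) := by
        push_cast [map_add, map_mul, map_pow, map_sub]
        linear_combination (-(((algebraMap O K π) ^ e) * ((algebraMap O K π) ^ e))) * hSval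
          - (algebraMap O K (W : O) + u * (algebraMap O K π) ^ e
              + algebraMap O K a₁ * (algebraMap O K π) ^ e) * hWe
      have keyO : (W : O) ^ 2 + a₁ * (W : O) * π ^ e = (r₀ * r₂ - a₂) * (π ^ e * π ^ e) :=
        hinj key
      have hdvd : π ∣ (W : O) ^ 2 := by
        have hW2 : (W : O) ^ 2 = (r₀ * r₂ - a₂) * (π ^ e * π ^ e) - a₁ * (W : O) * π ^ e := by
          linear_combination keyO
        rw [hW2]
        exact dvd_sub (Dvd.dvd.mul_left (Dvd.dvd.mul_right (dvd_pow_self π (by omega)) _) _)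
          (Dvd.dvd.mul_left (dvd_pow_self π (by omega)) _)
      exact hπ.not_isUnit (isUnit_of_dvd_unit (hprime.dvd_of_dvd_pow hdvd) W.isUnit)
  obtain ⟨c, hc⟩ := hu
  -- Step 2 : the element s = c² + a₁ c + a₂ and its basic properties
  set s : O := c ^ 2 + a₁ * c + a₂ with hs_def
  have hs_eq : r₀ * r₂ = s := by
    apply hinj
    rw [map_mul, hSval, hs_def, map_add, map_add, map_mul, map_pow, hc]
  have fact1 : ¬ π ^ 2 ∣ s := by
    intro hdvd
    by_cases hcπ : π ∣ c
    · apply hd₂'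
      have h1 : π ^ 2 ∣ c ^ 2 + a₁ * c := by
        apply dvd_add
        · exact pow_dvd_pow_of_dvd hcπ 2
        · rw [sq]
          exact mul_dvd_mul hd₁ hcπ
      have h2 := dvd_sub hdvd h1
      simpa [hs_def] using h2
    · apply hcπ
      apply hprime.dvd_of_dvd_pow (n := 2)
      have hc2 : c ^ 2 = s - a₁ * c - a₂ := by rw [hs_def]; ring
      rw [hc2]
      exact dvd_sub (dvd_sub ((dvd_pow_self π two_ne_zero).trans hdvd) (hd₁.mul_right c)) hd₂
  have fact2 : π ∣ s → π ∣ c := by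
    intro hdvd
    apply hprime.dvd_of_dvd_pow (n := 2)
    have hc2 : c ^ 2 = s - a₁ * c - a₂ := by rw [hs_def]; ring
    rw [hc2]
    exact dvd_sub (dvd_sub hdvd (hd₁.mul_right c)) hd₂
  -- Step 3 : analysis of t
  obtain ⟨Wt, m, k, hWt⟩ := eisenstein_aux_rep π hπ t ht
  have hr₀O : r₀ * (π ^ k * π ^ k) = π ^ i * ((Wt : O) * π ^ m) ^ 2 := by
    apply hinj
    push_cast [map_mul, map_pow]
    linear_combination ((algebraMap O K π) ^ k * (algebraMap O K π) ^ k) * hr₀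
      + ((algebraMap O K π) ^ i * (t * (algebraMap O K π) ^ k
          + algebraMap O K (Wt : O) * (algebraMap O K π) ^ m)) * hWt
  have hkm : k ≤ m := by
    by_contra hk
    push_neg at hk
    have hii : i ≤ 1 := by rcases hi with h | h <;> omega
    obtain ⟨nn, hnn⟩ : ∃ nn, k + k = (2 * m + i) + 1 + nn :=
      ⟨k + k - (2 * m + i) - 1, by omega⟩
    have hcan : π ^ (2 * m + i) * ((Wt : O) ^ 2) = π ^ (2 * m + i) * (π * (r₀ * π ^ nn)) := by
      have h1 : r₀ * (π ^ k * π ^ k) = r₀ * π ^ ((2 * m + i) + 1 + nn) := by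
        rw [← pow_add, ← hnn]
      calc π ^ (2 * m + i) * ((Wt : O) ^ 2) = π ^ i * ((Wt : O) * π ^ m) ^ 2 := by
            rw [pow_add, pow_mul]; ring
        _ = r₀ * (π ^ k * π ^ k) := hr₀O.symm
        _ = r₀ * π ^ ((2 * m + i) + 1 + nn) := h1
        _ = π ^ (2 * m + i) * (π * (r₀ * π ^ nn)) := by rw [pow_add, pow_add]; ring
    have hW2 : (Wt : O) ^ 2 = π * (r₀ * π ^ nn) :=
      mul_left_cancel₀ (pow_ne_zero _ hπ0) hcan
    have hdvd : π ∣ (Wt : O) ^ 2 := ⟨r₀ * π ^ nn, hW2⟩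
    exact hπ.not_isUnit (isUnit_of_dvd_unit (hprime.dvd_of_dvd_pow hdvd) Wt.isUnit)
  set ct : O := (Wt : O) * π ^ (m - k) with hct_def
  have hct : algebraMap O K ct = t := by
    apply mul_right_cancel₀ (pow_ne_zero k hπK)
    rw [hct_def, map_mul, map_pow, mul_assoc, ← pow_add, Nat.sub_add_cancel hkm]
    exact hWt.symm
  have hr₀ct : r₀ = π ^ i * ct ^ 2 := by
    apply hinj
    rw [map_mul, map_pow, map_pow, hct, hr₀]
  have hs_ct : s = π ^ i * ct ^ 2 * r₂ := by
    rw [← hs_eq, hr₀ct]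
  have hmeq : m = k := by
    by_contra hne
    apply fact1
    rw [hs_ct]
    have hπct : π ∣ ct := by
      rw [hct_def]
      exact Dvd.dvd.mul_left (dvd_pow_self π (by omega)) _
    exact Dvd.dvd.mul_right (Dvd.dvd.mul_left (pow_dvd_pow_of_dvd hπct 2) _) _
  have hctu : IsUnit ct := by
    rw [hct_def, show m - k = 0 by omega, pow_zero, mul_one]
    exact Wt.isUnit
  refine ⟨⟨ct, hctu, hct⟩, ⟨c, hc⟩, ?_⟩
  intro hi1
  refine ⟨c, (hmem c).mpr (fact2 ?_), hc⟩
  rw [hs_ct, hi1, pow_one]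
  exact Dvd.dvd.mul_right (Dvd.dvd.mul_right dvd_rfl _) _
end

section
/- Let K be a field complete with respect to a discrete valuation ord : K^× → ℤ, with valuation ring O, and assume the residue field of O has characteristic ≠ 2. Let P ∈ O with 0 ≤ ord(P) ≤ 1 and P not a square in K. Let t₁, t₂, t₃, t₄ ∈ O ∖ {0} and u₁, u₂, u₃ ∈ O with u_i ∈ t_i·O for i = 1, 2, 3, and set Q = u₁² + u₂² + u₃² − 2(u₁u₂ + u₁u₃ + u₂u₃). If Q − t₄²·P ∈ t₁t₂t₃·O, then (a) min(ord(t₁), ord(t₂), ord(t₃)) ≤ ord(t₄), and (b) ord(t_i) ≤ 2·ord(t₄) + 1 for i = 1, 2, 3. -/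
open IsLocalRing

/-- Decomposition `x = π^m * w` with `π ∤ w` and `m = ord x`, from the characterization of
`ord` by divisibility by powers of the uniformizer. -/
lemma SPE.hdec {O : Type*} [CommRing O] (π : O) (ord : O → ℤ)
    (hord : ∀ x : O, x ≠ 0 → ∀ n : ℕ, (π ^ n ∣ x ↔ (n : ℤ) ≤ ord x))
    {x : O} (hx : x ≠ 0) :
    ∃ (m : ℕ) (w : O), x = π ^ m * w ∧ ¬ π ∣ w ∧ (m : ℤ) = ord x := by
  have h0 : (0 : ℤ) ≤ ord x :=
    by simpa using (hord x hx 0).mp (by rw [pow_zero]; exact one_dvd x)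
  obtain ⟨n, hn⟩ : ∃ n : ℕ, (n : ℤ) = ord x := ⟨(ord x).toNat, Int.toNat_of_nonneg h0⟩
  obtain ⟨w, hw⟩ := (hord x hx n).mpr hn.le
  refine ⟨n, w, hw, fun hpw => ?_, hn⟩
  obtain ⟨c, hc⟩ := hpw
  have hd : π ^ (n + 1) ∣ x := ⟨c, by rw [hw, hc]; ring⟩
  have := (hord x hx _).mp hd
  push_cast at this
  omega

/-- If `π^k ∣ π^m * w` with `π` prime not dividing `w`, then `k ≤ m`. -/
lemma SPE.pow_dvd_le {O : Type*} [CommRing O] [IsDomain O] {π : O} (hπ : Prime π) {w : O}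
    (hw : ¬ π ∣ w) {k m : ℕ} (h : π ^ k ∣ π ^ m * w) : k ≤ m := by
  by_contra hkm
  push_neg at hkm
  have h1 : π ^ m * π ∣ π ^ m * w := by
    refine dvd_trans ?_ h
    calc π ^ m * π = π ^ (m + 1) := by ring
    _ ∣ π ^ k := pow_dvd_pow _ hkm
  exact hw ((mul_dvd_mul_iff_left (pow_ne_zero m hπ.ne_zero)).mp h1)

/-- `π^(2b+2)` does not divide `π^(2b) * (s^2 * P)` when `π ∤ s` and `π^2 ∤ P`. -/
lemma SPE.keyA {O : Type*} [CommRing O] [IsDomain O] {π : O} (hπ : Prime π) {s P : O}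
    (hs : ¬ π ∣ s) (hP2 : ¬ π ^ 2 ∣ P) (b : ℕ) :
    ¬ π ^ (2 * b + 2) ∣ π ^ (2 * b) * (s ^ 2 * P) := by
  intro h
  have h2 : π ^ 2 ∣ s ^ 2 * P := by
    refine (mul_dvd_mul_iff_left (pow_ne_zero (2 * b) hπ.ne_zero)).mp ?_
    calc π ^ (2 * b) * π ^ 2 = π ^ (2 * b + 2) := by ring
    _ ∣ π ^ (2 * b) * (s ^ 2 * P) := h
  have hs2 : ¬ π ∣ s ^ 2 := fun hd => hs (hπ.dvd_of_dvd_pow hd)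
  have hπP : π ∣ P := by
    have h1 : π ∣ s ^ 2 * P := (dvd_pow_self π two_ne_zero).trans h2
    rcases hπ.dvd_mul.mp h1 with h | h
    · exact absurd h hs2
    · exact h
  obtain ⟨c, hc⟩ := hπP
  have hπc : π ∣ c := by
    have h1 : π * π ∣ π * (s ^ 2 * c) := by
      calc π * π = π ^ 2 := by ring
      _ ∣ s ^ 2 * P := h2
      _ = π * (s ^ 2 * c) := by rw [hc]; ring
    have h3 : π ∣ s ^ 2 * c := (mul_dvd_mul_iff_left hπ.ne_zero).mp h1
    rcases hπ.dvd_mul.mp h3 with h | h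
    · exact absurd h hs2
    · exact h
  obtain ⟨d, hd⟩ := hπc
  exact hP2 ⟨d, by rw [hc, hd]; ring⟩

/-- Part (b) of the estimate, for the first variable. -/
lemma SPE.aux_b {O : Type*} [CommRing O] [IsDomain O] [IsDiscreteValuationRing O]
    [IsAdicComplete (maximalIdeal O) O]
    {K : Type*} [Field K] [Algebra O K] [IsFractionRing O K]
    (h2 : IsUnit (2 : O)) (π : O) (hπ : Irreducible π)
    (ord : O → ℤ) (hord : ∀ x : O, x ≠ 0 → ∀ n : ℕ, (π ^ n ∣ x ↔ (n : ℤ) ≤ ord x))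
    (P : O) (hP : P ≠ 0) (hP1 : ord P ≤ 1)
    (hPsq : ¬ IsSquare (algebraMap O K P))
    (t₁ t₂ t₃ t₄ : O) (ht₁ : t₁ ≠ 0) (ht₄ : t₄ ≠ 0)
    (u₁ u₂ u₃ : O) (hu₁ : t₁ ∣ u₁)
    (hQ : t₁ * t₂ * t₃ ∣
      (u₁ ^ 2 + u₂ ^ 2 + u₃ ^ 2 - 2 * (u₁ * u₂ + u₁ * u₃ + u₂ * u₃) - t₄ ^ 2 * P)) :
    ord t₁ ≤ 2 * ord t₄ + 1 := by
  have hπp : Prime π := hπ.prime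
  by_contra hcon
  push_neg at hcon
  obtain ⟨b, s, ht4eq, hπs, hb⟩ := SPE.hdec π ord hord ht₄
  have hP2 : ¬ π ^ 2 ∣ P := fun h => by
    have := (hord P hP 2).mp h; push_cast at this; omega
  have h1 : π ^ (2 * b + 2) ∣ t₁ := (hord t₁ ht₁ (2 * b + 2)).mpr (by push_cast; omega)
  have hu : π ^ (2 * b + 2) ∣ u₁ := h1.trans hu₁
  have hT : π ^ (2 * b + 2) ∣ t₁ * t₂ * t₃ := (h1.mul_right t₂).mul_right t₃
  have ht4P : t₄ ^ 2 * P = π ^ (2 * b) * (s ^ 2 * P) := by rw [ht4eq]; ring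
  have hQ2 : π ^ (2 * b + 2) ∣ (u₂ - u₃) ^ 2 - t₄ ^ 2 * P := by
    have h3 := dvd_sub (hT.trans hQ) (hu.mul_right (u₁ - 2 * u₂ - 2 * u₃))
    convert h3 using 1
    ring
  set v := u₂ - u₃ with hv_def
  by_cases hπP : π ∣ P
  · -- ord P = 1 case: parity contradiction
    obtain ⟨c, hc⟩ := hπP
    have ht4P1 : π ^ (2 * b + 1) ∣ t₄ ^ 2 * P := ⟨s ^ 2 * c, by rw [ht4eq, hc]; ring⟩
    have hv2 : π ^ (2 * b + 1) ∣ v ^ 2 := by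
      have := dvd_add ((pow_dvd_pow π (by omega : 2 * b + 1 ≤ 2 * b + 2)).trans hQ2) ht4P1
      convert this using 1; ring
    have hv2' : π ^ (2 * b + 2) ∣ v ^ 2 := by
      rcases eq_or_ne v 0 with hv0 | hv0
      · simp [hv0]
      · obtain ⟨m, w, hveq, hπw, _⟩ := SPE.hdec π ord hord hv0
        have hw2 : ¬ π ∣ w ^ 2 := fun h => hπw (hπp.dvd_of_dvd_pow h)
        have hle : 2 * b + 1 ≤ 2 * m :=
          SPE.pow_dvd_le hπp hw2 (by rw [show π ^ (2 * m) * w ^ 2 = v ^ 2 from by rw [hveq]; ring]; exact hv2)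
        calc π ^ (2 * b + 2) ∣ π ^ (2 * m) := pow_dvd_pow _ (by omega)
        _ ∣ v ^ 2 := ⟨w ^ 2, by rw [hveq]; ring⟩
    have : π ^ (2 * b + 2) ∣ π ^ (2 * b) * (s ^ 2 * P) := by
      rw [← ht4P]
      have := dvd_sub hv2' hQ2
      convert this using 1; ring
    exact SPE.keyA hπp hπs hP2 b this
  · -- ord P = 0 case: Hensel's lemma contradiction
    have hsP : ¬ π ∣ s ^ 2 * P := by
      intro h
      rcases hπp.dvd_mul.mp h with h | h
      · exact hπs (hπp.dvd_of_dvd_pow h)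
      · exact hπP h
    have hnd : ¬ π ^ (2 * b + 1) ∣ π ^ (2 * b) * (s ^ 2 * P) := by
      intro h
      exact absurd (by linarith [SPE.pow_dvd_le hπp hsP h] : (2*b+1 : ℕ) ≤ 2*b) (by omega)
    have hv0 : v ≠ 0 := by
      intro h
      apply hnd
      rw [← ht4P]
      have : π ^ (2 * b + 2) ∣ t₄ ^ 2 * P := by
        have := hQ2; rw [h] at this
        simpa using (dvd_neg.mpr this)
      exact (pow_dvd_pow π (by omega)).trans this
    obtain ⟨m, w, hveq, hπw, _⟩ := SPE.hdec π ord hord hv0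
    have hw2 : ¬ π ∣ w ^ 2 := fun h => hπw (hπp.dvd_of_dvd_pow h)
    have hge : 2 * b ≤ 2 * m := by
      refine SPE.pow_dvd_le hπp hw2 ?_
      rw [show π ^ (2 * m) * w ^ 2 = v ^ 2 from by rw [hveq]; ring]
      have := dvd_add ((pow_dvd_pow π (by omega : 2 * b ≤ 2 * b + 2)).trans hQ2)
        (Dvd.intro _ ht4P.symm)
      convert this using 1; ring
    have hlt : ¬ (2 * b + 1 ≤ 2 * m) := by
      intro h
      apply hnd
      rw [← ht4P]
      have hv21 : π ^ (2 * b + 1) ∣ v ^ 2 :=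
        (pow_dvd_pow π h).trans ⟨w ^ 2, by rw [hveq]; ring⟩
      have := dvd_sub hv21 ((pow_dvd_pow π (by omega : 2 * b + 1 ≤ 2 * b + 2)).trans hQ2)
      convert this using 1; ring
    have hm : m = b := by omega
    subst hm
    -- π^2 ∣ w^2 - s^2 * P
    have hww : π ∣ w ^ 2 - s ^ 2 * P := by
      have h4 : π ^ (2 * m) * π ^ 2 ∣ π ^ (2 * m) * (w ^ 2 - s ^ 2 * P) := by
        calc π ^ (2 * m) * π ^ 2 = π ^ (2 * m + 2) := by ring
        _ ∣ v ^ 2 - t₄ ^ 2 * P := hQ2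
        _ = π ^ (2 * m) * (w ^ 2 - s ^ 2 * P) := by rw [hveq, ht4P]; ring
      have := (mul_dvd_mul_iff_left (pow_ne_zero (2 * m) hπp.ne_zero)).mp h4
      exact (dvd_pow_self π two_ne_zero).trans this
    -- Hensel's lemma
    have hmax : maximalIdeal O = Ideal.span {π} := hπ.maximalIdeal_eq
    have hmem : ∀ x : O, x ∈ maximalIdeal O ↔ π ∣ x := fun x => by
      rw [hmax, Ideal.mem_span_singleton]
    have hwunit : IsUnit w := by
      by_contra h
      exact hπw ((hmem w).mp ((mem_maximalIdeal w).mpr h))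
    obtain ⟨a, ha, -⟩ := HenselianRing.is_henselian (I := maximalIdeal O)
      (Polynomial.X ^ 2 - Polynomial.C (s ^ 2 * P))
      (Polynomial.monic_X_pow_sub_C _ two_ne_zero) w
      (by
        rw [hmem]
        simpa using hww)
      (by
        have hder : (Polynomial.X ^ 2 - Polynomial.C (s ^ 2 * P) : Polynomial O).derivative
            = Polynomial.C 2 * Polynomial.X := by
          rw [Polynomial.derivative_sub, Polynomial.derivative_C, Polynomial.derivative_X_pow,
            sub_zero]
          norm_num
        rw [hder]
        simpa using (h2.mul hwunit).map (Ideal.Quotient.mk (maximalIdeal O)))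
    have ha' : a ^ 2 = s ^ 2 * P := by
      have := ha
      simp only [Polynomial.IsRoot, Polynomial.eval_sub, Polynomial.eval_pow,
        Polynomial.eval_X, Polynomial.eval_C, sub_eq_zero] at this
      exact this
    apply hPsq
    have hs0 : s ≠ 0 := fun h => hπs (by simp [h])
    have hS0 : (algebraMap O K) s ≠ 0 := fun h =>
      hs0 ((injective_iff_map_eq_zero _).mp (IsFractionRing.injective O K) s h)
    refine ⟨algebraMap O K a / algebraMap O K s, ?_⟩
    have key : P * (s * s) = a * a := by linear_combination -ha'
    rw [div_mul_div_comm, eq_div_iff (mul_ne_zero hS0 hS0), ← map_mul, ← map_mul, ← map_mul]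
    exact congrArg _ key

/-- The key integrality claims in the uniform estimate of the standard local zeta function
at a split non-dyadic place (Proposition 8.3 of the paper).  Here `O` is a complete
discrete valuation ring with fraction field `K` and odd residue characteristic, `ord` is
the normalized valuation (characterized by `π^n ∣ x ↔ n ≤ ord x` for `x ≠ 0`), and `P ∈ O`
has `0 ≤ ord P ≤ 1` and is not a square in `K`. -/
theorem split_place_estimate {O : Type*} [CommRing O] [IsDomain O] [IsDiscreteValuationRing O]
    [IsAdicComplete (maximalIdeal O) O]
    {K : Type*} [Field K] [Algebra O K] [IsFractionRing O K]
    (h2 : IsUnit (2 : O)) (π : O) (hπ : Irreducible π)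
    (ord : O → ℤ) (hord : ∀ x : O, x ≠ 0 → ∀ n : ℕ, (π ^ n ∣ x ↔ (n : ℤ) ≤ ord x))
    (P : O) (hP : P ≠ 0) (hP0 : 0 ≤ ord P) (hP1 : ord P ≤ 1)
    (hPsq : ¬ IsSquare (algebraMap O K P))
    (t₁ t₂ t₃ t₄ : O) (ht₁ : t₁ ≠ 0) (ht₂ : t₂ ≠ 0) (ht₃ : t₃ ≠ 0) (ht₄ : t₄ ≠ 0)
    (u₁ u₂ u₃ : O) (hu₁ : t₁ ∣ u₁) (hu₂ : t₂ ∣ u₂) (hu₃ : t₃ ∣ u₃)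
    (hQ : t₁ * t₂ * t₃ ∣
      (u₁ ^ 2 + u₂ ^ 2 + u₃ ^ 2 - 2 * (u₁ * u₂ + u₁ * u₃ + u₂ * u₃) - t₄ ^ 2 * P)) :
    min (ord t₁) (min (ord t₂) (ord t₃)) ≤ ord t₄ ∧
    (ord t₁ ≤ 2 * ord t₄ + 1 ∧ ord t₂ ≤ 2 * ord t₄ + 1 ∧ ord t₃ ≤ 2 * ord t₄ + 1) := by
  have hπp : Prime π := hπ.prime
  constructor
  · -- part (a)
    by_contra hcon
    push_neg at hcon
    rw [lt_min_iff, lt_min_iff] at hcon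
    obtain ⟨hc1, hc2, hc3⟩ := hcon
    obtain ⟨b, s, ht4eq, hπs, hb⟩ := SPE.hdec π ord hord ht₄
    have hP2 : ¬ π ^ 2 ∣ P := fun h => by
      have := (hord P hP 2).mp h; push_cast at this; omega
    have hd : ∀ t : O, t ≠ 0 → ord t₄ < ord t → π ^ (b + 1) ∣ t := fun t ht h =>
      (hord t ht (b + 1)).mpr (by push_cast; omega)
    obtain ⟨c₁, hc₁⟩ := (hd t₁ ht₁ hc1).trans hu₁
    obtain ⟨c₂, hc₂⟩ := (hd t₂ ht₂ hc2).trans hu₂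
    obtain ⟨c₃, hc₃⟩ := (hd t₃ ht₃ hc3).trans hu₃
    have hQd : π ^ (2 * b + 2) ∣
        u₁ ^ 2 + u₂ ^ 2 + u₃ ^ 2 - 2 * (u₁ * u₂ + u₁ * u₃ + u₂ * u₃) :=
      ⟨c₁ ^ 2 + c₂ ^ 2 + c₃ ^ 2 - 2 * (c₁ * c₂ + c₁ * c₃ + c₂ * c₃), by
        rw [hc₁, hc₂, hc₃]; ring⟩
    have hT : π ^ (2 * b + 2) ∣ t₁ * t₂ * t₃ := by
      calc π ^ (2 * b + 2) ∣ π ^ (b + 1) * π ^ (b + 1) * π ^ (b + 1) :=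
        ⟨π ^ (b + 1), by ring⟩
      _ ∣ t₁ * t₂ * t₃ :=
        mul_dvd_mul (mul_dvd_mul (hd t₁ ht₁ hc1) (hd t₂ ht₂ hc2)) (hd t₃ ht₃ hc3)
    have hfinal : π ^ (2 * b + 2) ∣ π ^ (2 * b) * (s ^ 2 * P) := by
      rw [show π ^ (2 * b) * (s ^ 2 * P) = t₄ ^ 2 * P from by rw [ht4eq]; ring]
      have := dvd_sub hQd (hT.trans hQ)
      convert this using 1; ring
    exact SPE.keyA hπp hπs hP2 b hfinal
  · refine ⟨?_, ?_, ?_⟩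
    · exact SPE.aux_b h2 π hπ ord hord P hP hP1 hPsq t₁ t₂ t₃ t₄ ht₁ ht₄ u₁ u₂ u₃ hu₁ hQ
    · refine SPE.aux_b h2 π hπ ord hord P hP hP1 hPsq t₂ t₁ t₃ t₄ ht₂ ht₄ u₂ u₁ u₃ hu₂ ?_
      rw [show t₂ * t₁ * t₃ = t₁ * t₂ * t₃ from by ring,
        show u₂ ^ 2 + u₁ ^ 2 + u₃ ^ 2 - 2 * (u₂ * u₁ + u₂ * u₃ + u₁ * u₃) - t₄ ^ 2 * P
          = u₁ ^ 2 + u₂ ^ 2 + u₃ ^ 2 - 2 * (u₁ * u₂ + u₁ * u₃ + u₂ * u₃) - t₄ ^ 2 * P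
          from by ring]
      exact hQ
    · refine SPE.aux_b h2 π hπ ord hord P hP hP1 hPsq t₃ t₁ t₂ t₄ ht₃ ht₄ u₃ u₁ u₂ hu₃ ?_
      rw [show t₃ * t₁ * t₂ = t₁ * t₂ * t₃ from by ring,
        show u₃ ^ 2 + u₁ ^ 2 + u₂ ^ 2 - 2 * (u₃ * u₁ + u₃ * u₂ + u₁ * u₂) - t₄ ^ 2 * P
          = u₁ ^ 2 + u₂ ^ 2 + u₃ ^ 2 - 2 * (u₁ * u₂ + u₁ * u₃ + u₂ * u₃) - t₄ ^ 2 * P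
          from by ring]
      exact hQ
end

section
/- Let K be a field complete with respect to a discrete valuation ord : K^× → ℤ, with valuation ring O and residue field of characteristic ≠ 2, and let K̃/K be the unramified quadratic extension with valuation ring Õ, nontrivial K-automorphism σ, and ord extended to K̃ (still taking integer values). Let P ∈ O with 0 ≤ ord(P) ≤ 1 and P not a square in K. Let t₁ ∈ Õ ∖ {0}, t₂, t₃ ∈ O ∖ {0}, u₁ ∈ t₁^σ·Õ, u₂ ∈ t₂·O, and set Q = u₁² + u₂² + (u₁^σ)² − 2(u₁u₂ + u₁^σ u₂ + u₁ u₁^σ). If Q − t₃²·P ∈ t₂·t₁t₁^σ·O, then (a) ord(t₂) ≤ ord(t₃) or ord(t₁) ≤ ord(t₃), and (b) ord(t₁) ≤ 2·ord(t₃) + 1. -/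
open IsLocalRing Polynomial

private lemma unit_mul_pow_dvd_iff {R : Type*} [CommMonoidWithZero R] [IsCancelMulZero R] {p : R}
    (hp0 : p ≠ 0) (hpu : ¬ IsUnit p) (u : Rˣ) {i j : ℕ} :
    p ^ i ∣ (u : R) * p ^ j ↔ i ≤ j := by
  rw [Units.dvd_mul_left, pow_dvd_pow_iff hp0 hpu]

/-- The key integrality claims in the uniform estimate of the standard local zeta function
at an inert non-dyadic place (Proposition 8.4 of the paper).  Here `O` is a complete
discrete valuation ring with fraction field `K` and odd residue characteristic, `O'` is the
valuation ring of the unramified quadratic extension (free of rank 2 over `O`, with the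
uniformizer `π` of `O` staying irreducible), `σ` is the nontrivial `O`-automorphism of `O'`
(with fixed ring `O`), and `ord` is the normalized valuation on `O'`, characterized by
`π^n ∣ x ↔ n ≤ ord x` for `x ≠ 0`.  `P ∈ O` has `0 ≤ ord P ≤ 1` and is not a square
in `K`. -/
theorem inert_place_estimate {O : Type*} [CommRing O] [IsDomain O] [IsDiscreteValuationRing O]
    [IsAdicComplete (maximalIdeal O) O]
    {K : Type*} [Field K] [Algebra O K] [IsFractionRing O K]
    {O' : Type*} [CommRing O'] [IsDomain O'] [IsDiscreteValuationRing O'] [Algebra O O']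
    (hinj : Function.Injective (algebraMap O O'))
    [Module.Free O O'] (hrank : Module.finrank O O' = 2)
    (σ : O' ≃ₐ[O] O') (hσ : σ ≠ AlgEquiv.refl)
    (hfix : ∀ x : O', σ x = x → ∃ y : O, algebraMap O O' y = x)
    (h2 : IsUnit (2 : O)) (π : O) (hπ : Irreducible π) (hπ' : Irreducible (algebraMap O O' π))
    (ord : O' → ℤ)
    (hord : ∀ x : O', x ≠ 0 → ∀ n : ℕ, ((algebraMap O O' π) ^ n ∣ x ↔ (n : ℤ) ≤ ord x))
    (P : O) (hP : P ≠ 0) (hP0 : 0 ≤ ord (algebraMap O O' P)) (hP1 : ord (algebraMap O O' P) ≤ 1)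
    (hPsq : ¬ IsSquare (algebraMap O K P))
    (t₁ : O') (ht₁ : t₁ ≠ 0) (t₂ t₃ : O) (ht₂ : t₂ ≠ 0) (ht₃ : t₃ ≠ 0)
    (u₁ : O') (hu₁ : σ t₁ ∣ u₁) (u₂ : O) (hu₂ : t₂ ∣ u₂)
    (hQ : ∃ m : O,
      u₁ ^ 2 + algebraMap O O' u₂ ^ 2 + (σ u₁) ^ 2 -
          2 * (u₁ * algebraMap O O' u₂ + σ u₁ * algebraMap O O' u₂ + u₁ * σ u₁) -
        algebraMap O O' (t₃ ^ 2 * P) =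
      algebraMap O O' t₂ * (t₁ * σ t₁) * algebraMap O O' m) :
    (ord (algebraMap O O' t₂) ≤ ord (algebraMap O O' t₃) ∨
      ord t₁ ≤ ord (algebraMap O O' t₃)) ∧
    ord t₁ ≤ 2 * ord (algebraMap O O' t₃) + 1 := by
  classical
  obtain ⟨m, hQm⟩ := hQ
  haveI hfin : Module.Finite O O' := Module.finite_of_finrank_eq_succ (n := 1) hrank
  -- every element of O' satisfies a monic quadratic over O
  have hquad : ∀ x : O', ∃ c1 c0 : O,
      x ^ 2 + algebraMap O O' c1 * x + algebraMap O O' c0 = 0 := by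
    intro x
    set f := (Algebra.lmul O O') x with hf
    have hmon := f.charpoly_monic
    have hdeg : f.charpoly.natDegree = 2 := by
      rw [f.charpoly_natDegree, hrank]
    have haev : Polynomial.aeval x f.charpoly = 0 := by
      have h1 : Polynomial.aeval ((Algebra.lmul O O') x) f.charpoly
          = (Algebra.lmul O O') (Polynomial.aeval x f.charpoly) :=
        Polynomial.aeval_algHom_apply (Algebra.lmul O O') x f.charpoly
      rw [← hf, f.aeval_self_charpoly] at h1
      have h2 := congrArg (fun g : Module.End O O' => g 1) h1.symm
      simpa using h2
    set p := f.charpoly with hp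
    have hq1 : (p - X ^ 2).natDegree ≤ 1 := by
      rw [Polynomial.natDegree_le_iff_coeff_eq_zero]
      intro N hN
      rcases eq_or_lt_of_le (show 2 ≤ N by omega) with h | h
      · have : p.coeff 2 = 1 := by
          have := hmon.coeff_natDegree
          rwa [hdeg] at this
        simp [Polynomial.coeff_sub, Polynomial.coeff_X_pow, ← h, this]
      · have h0 : p.coeff N = 0 :=
          Polynomial.coeff_eq_zero_of_natDegree_lt (by omega)
        simp only [Polynomial.coeff_sub, Polynomial.coeff_X_pow, h0]
        rw [if_neg (by omega)]
        ring
    have hdecomp := Polynomial.eq_X_add_C_of_natDegree_le_one hq1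
    refine ⟨(p - X ^ 2).coeff 1, (p - X ^ 2).coeff 0, ?_⟩
    have hpdec : p = X ^ 2 + (C ((p - X ^ 2).coeff 1) * X + C ((p - X ^ 2).coeff 0)) := by
      rw [← hdecomp]; ring
    have hthis := haev
    rw [hpdec] at hthis
    rw [map_add, map_add, map_mul, map_pow, Polynomial.aeval_X, Polynomial.aeval_C,
      Polynomial.aeval_C] at hthis
    linear_combination hthis
  -- σ is an involution
  have hsig2 : ∀ x : O', σ (σ x) = x := by
    intro x
    by_cases hx : σ x = x
    · rw [hx, hx]
    obtain ⟨c1, c0, hx0⟩ := hquad x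
    have hx1 : (σ x) ^ 2 + algebraMap O O' c1 * (σ x) + algebraMap O O' c0 = 0 := by
      have h := congrArg σ hx0
      simpa [map_add, map_mul, map_pow] using h
    have hfac : (σ x - x) * (σ x + x + algebraMap O O' c1) = 0 := by
      linear_combination hx1 - hx0
    rcases mul_eq_zero.mp hfac with h | h
    · exact absurd (sub_eq_zero.mp h) hx
    · have h' : σ (σ x) + σ x + algebraMap O O' c1 = 0 := by
        have hh := congrArg σ h
        simpa [map_add] using hh
      linear_combination h' - h
  -- basic facts about π
  have hπ'0 : algebraMap O O' π ≠ 0 := hπ'.ne_zero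
  have hπ'u : ¬ IsUnit (algebraMap O O' π) := hπ'.not_isUnit
  have hπ0 : π ≠ 0 := hπ.ne_zero
  have hπu : ¬ IsUnit π := hπ.not_isUnit
  -- ord of a unit times a power of π
  have hordrep : ∀ (u : O'ˣ) (k : ℕ), ord ((u : O') * algebraMap O O' π ^ k) = k := by
    intro u k
    have hx0 : (u : O') * algebraMap O O' π ^ k ≠ 0 :=
      mul_ne_zero (Units.ne_zero u) (pow_ne_zero _ hπ'0)
    have h1 : (k : ℤ) ≤ ord ((u : O') * algebraMap O O' π ^ k) :=
      (hord _ hx0 k).mp ((unit_mul_pow_dvd_iff hπ'0 hπ'u u).mpr le_rfl)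
    have h2 : ¬ ((k + 1 : ℕ) : ℤ) ≤ ord ((u : O') * algebraMap O O' π ^ k) := by
      intro h
      have := (hord _ hx0 (k + 1)).mpr h
      have := (unit_mul_pow_dvd_iff hπ'0 hπ'u u).mp this
      omega
    push_cast at h2
    omega
  have hordO : ∀ (v : Oˣ) (k : ℕ), ord (algebraMap O O' ((v : O) * π ^ k)) = k := by
    intro v k
    obtain ⟨w, hw⟩ := v.isUnit.map (algebraMap O O')
    have he : algebraMap O O' ((v : O) * π ^ k) = (w : O') * (algebraMap O O' π) ^ k := by
      rw [map_mul, map_pow, hw]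
    rw [he]
    exact hordrep w k
  -- reflection of divisibility
  have hrefl : ∀ (y : O) (j : ℕ),
      (algebraMap O O' π) ^ j ∣ algebraMap O O' y → π ^ j ∣ y := by
    intro y j hdvd
    by_cases hy : y = 0
    · simp [hy]
    obtain ⟨k, u, hyr⟩ := IsDiscreteValuationRing.eq_unit_mul_pow_irreducible hy hπ
    obtain ⟨w, hw⟩ := u.isUnit.map (algebraMap O O')
    rw [hyr, map_mul, map_pow, ← hw] at hdvd
    have hk : j ≤ k := (unit_mul_pow_dvd_iff hπ'0 hπ'u w).mp hdvd
    rw [hyr]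
    exact (pow_dvd_pow π hk).mul_left _
  -- representations
  obtain ⟨a', v₁, ht₁r⟩ := IsDiscreteValuationRing.eq_unit_mul_pow_irreducible ht₁ hπ'
  obtain ⟨b', v₂, ht₂r⟩ := IsDiscreteValuationRing.eq_unit_mul_pow_irreducible ht₂ hπ
  obtain ⟨c', v₃, ht₃r⟩ := IsDiscreteValuationRing.eq_unit_mul_pow_irreducible ht₃ hπ
  obtain ⟨p', vP, hPr⟩ := IsDiscreteValuationRing.eq_unit_mul_pow_irreducible hP hπ
  have horda : ord t₁ = a' := by rw [ht₁r]; exact hordrep v₁ a'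
  have hordb : ord (algebraMap O O' t₂) = b' := by rw [ht₂r]; exact hordO v₂ b'
  have hordc : ord (algebraMap O O' t₃) = c' := by rw [ht₃r]; exact hordO v₃ c'
  have hordP : ord (algebraMap O O' P) = p' := by rw [hPr]; exact hordO vP p'
  have hp'1 : p' ≤ 1 := by rw [hordP] at hP1; exact_mod_cast hP1
  -- divisibility of the basic pieces by powers of π
  have hσdvd : ∀ x y : O', x ∣ y → σ x ∣ σ y := by
    rintro x y ⟨z, rfl⟩
    exact ⟨σ z, by rw [map_mul]⟩
  have hd1 : (algebraMap O O' π) ^ a' ∣ t₁ := by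
    rw [ht₁r]; exact dvd_rfl.mul_left _
  have hd1' : (algebraMap O O' π) ^ a' ∣ σ t₁ := by
    have := hσdvd _ _ hd1
    rwa [map_pow, σ.commutes] at this
  have hdu₁ : (algebraMap O O' π) ^ a' ∣ u₁ := hd1'.trans hu₁
  have hdσu₁ : (algebraMap O O' π) ^ a' ∣ σ u₁ := by
    have := hσdvd _ _ hdu₁
    rwa [map_pow, σ.commutes] at this
  -- σ-fixed elements
  obtain ⟨n, hn⟩ := hfix (u₁ * σ u₁) (by rw [map_mul, hsig2]; ring)
  obtain ⟨n₁, hn₁⟩ := hfix (t₁ * σ t₁) (by rw [map_mul, hsig2]; ring)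
  obtain ⟨s, hs⟩ := hfix (algebraMap O O' u₂ - u₁ - σ u₁)
    (by rw [map_sub, map_sub, hsig2, AlgEquiv.commutes]; ring)
  have hdn : π ^ (2 * a') ∣ n := by
    apply hrefl
    rw [hn, two_mul, pow_add]
    exact mul_dvd_mul hdu₁ hdσu₁
  have hdn₁ : π ^ (2 * a') ∣ n₁ := by
    apply hrefl
    rw [hn₁, two_mul, pow_add]
    exact mul_dvd_mul hd1 hd1'
  have hdt₂ : π ^ b' ∣ t₂ := by rw [ht₂r]; exact dvd_rfl.mul_left _
  rw [map_mul, map_pow] at hQm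
  -- the master equation over O
  have key : (algebraMap O O' s) ^ 2 = algebraMap O O' t₃ ^ 2 * algebraMap O O' P
      + 4 * algebraMap O O' n + algebraMap O O' t₂ * algebraMap O O' n₁ * algebraMap O O' m := by
    rw [hs, hn, hn₁]
    linear_combination hQm
  have hOeq : s ^ 2 = t₃ ^ 2 * P + (4 * n + t₂ * n₁ * m) := by
    apply hinj
    simp only [map_add, map_mul, map_pow, map_ofNat]
    linear_combination key
  -- the core contradiction lemma
  have core : ∀ sb E : O, sb ^ 2 = t₃ ^ 2 * P + E → π ^ (2 * c' + 2) ∣ E → False := by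
    intro sb E heq hE
    have ht₃P : t₃ ^ 2 * P = ((v₃ ^ 2 * vP : Oˣ) : O) * π ^ (2 * c' + p') := by
      rw [ht₃r, hPr]; push_cast; rw [pow_add, two_mul, pow_add]; ring
    have hsb0 : sb ≠ 0 := by
      intro h0
      rw [h0] at heq
      have hd : π ^ (2 * c' + 2) ∣ t₃ ^ 2 * P := by
        have he : t₃ ^ 2 * P = -E := by linear_combination -heq
        rw [he]
        exact hE.neg_right
      rw [ht₃P] at hd
      have := (unit_mul_pow_dvd_iff hπ0 hπu _).mp hd
      omega
    obtain ⟨k, us, hsr⟩ := IsDiscreteValuationRing.eq_unit_mul_pow_irreducible hsb0 hπ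
    have hdvd_t₃P : ∀ j : ℕ, j ≤ 2 * c' + p' → π ^ j ∣ t₃ ^ 2 * P := by
      intro j hj
      rw [ht₃P]
      exact (unit_mul_pow_dvd_iff hπ0 hπu _).mpr hj
    have hdvd_E : ∀ j : ℕ, j ≤ 2 * c' + 2 → π ^ j ∣ E := fun j hj =>
      (pow_dvd_pow π hj).trans hE
    have hdvd_s : ∀ j : ℕ, π ^ j ∣ sb ^ 2 ↔ j ≤ 2 * k := by
      intro j
      have hrepr : sb ^ 2 = ((us * us : Oˣ) : O) * π ^ (k + k) := by
        rw [hsr]; push_cast; rw [pow_add]; ring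
      rw [hrepr, show (2 : ℕ) * k = k + k by omega]
      exact unit_mul_pow_dvd_iff hπ0 hπu _
    have hk : 2 * k = 2 * c' + p' := by
      by_contra hne
      rcases lt_or_gt_of_ne hne with hlt | hgt
      · have h1 : π ^ (2 * k + 1) ∣ sb ^ 2 := by
          rw [heq]
          exact dvd_add (hdvd_t₃P _ (by omega)) (hdvd_E _ (by omega))
        have := (hdvd_s _).mp h1
        omega
      · have h1 : π ^ (2 * c' + p' + 1) ∣ t₃ ^ 2 * P := by
          have he : t₃ ^ 2 * P = sb ^ 2 - E := by linear_combination -heq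
          rw [he]
          exact dvd_sub ((hdvd_s _).mpr (by omega)) (hdvd_E _ (by omega))
        rw [ht₃P] at h1
        have := (unit_mul_pow_dvd_iff hπ0 hπu _).mp h1
        omega
    have hp0 : p' = 0 := by omega
    have hkc : k = c' := by omega
    obtain ⟨E₁, hE₁⟩ := hE
    have hsr' : sb = (us : O) * π ^ c' := by rw [hsr, hkc]
    have hPr' : P = (vP : O) := by rw [hPr, hp0, pow_zero, mul_one]
    rw [hsr', ht₃r, hPr', hE₁, show 2 * c' + 2 = c' + c' + 2 by omega, pow_add, pow_add] at heq
    have h0 : (π ^ c') ^ 2 * ((us : O) ^ 2 - π ^ 2 * E₁ - (v₃ : O) ^ 2 * (vP : O)) = 0 := by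
      linear_combination heq
    have h1 : (us : O) ^ 2 - π ^ 2 * E₁ - (v₃ : O) ^ 2 * (vP : O) = 0 :=
      (mul_eq_zero.mp h0).resolve_left (pow_ne_zero _ (pow_ne_zero _ hπ0))
    -- Hensel's lemma
    have hmon2 : (X ^ 2 - C ((us : O) ^ 2 - π ^ 2 * E₁)).Monic :=
      monic_X_pow_sub_C _ (by norm_num)
    have heval : (X ^ 2 - C ((us : O) ^ 2 - π ^ 2 * E₁)).eval (us : O) ∈ maximalIdeal O := by
      have he2 : (X ^ 2 - C ((us : O) ^ 2 - π ^ 2 * E₁)).eval (us : O) = π * (π * E₁) := by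
        simp only [eval_sub, eval_pow, eval_X, eval_C]; ring
      rw [he2]
      exact Ideal.mul_mem_right _ _ ((mem_maximalIdeal π).mpr hπu)
    have hder : IsUnit (Ideal.Quotient.mk (maximalIdeal O)
        ((derivative (X ^ 2 - C ((us : O) ^ 2 - π ^ 2 * E₁))).eval (us : O))) := by
      have hde : (derivative (X ^ 2 - C ((us : O) ^ 2 - π ^ 2 * E₁))).eval (us : O)
          = 2 * (us : O) := by
        rw [derivative_sub, derivative_X_pow, derivative_C]
        simp only [sub_zero, eval_mul, eval_C, eval_pow, eval_X]
        norm_num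
      rw [hde]
      exact (h2.mul us.isUnit).map _
    obtain ⟨r, hr, -⟩ := HenselianRing.is_henselian (R := O) (I := maximalIdeal O)
      _ hmon2 _ heval hder
    have hr2 : r ^ 2 = (v₃ : O) ^ 2 * (vP : O) := by
      have := hr
      simp only [IsRoot, eval_sub, eval_pow, eval_X, eval_C, sub_eq_zero] at this
      rw [this]
      linear_combination h1
    have hPval : P = (r * ((v₃⁻¹ : Oˣ) : O)) ^ 2 := by
      have h2' : (v₃ : O) * ((v₃⁻¹ : Oˣ) : O) = 1 := Units.mul_inv v₃
      rw [hPr']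
      linear_combination (-(((v₃⁻¹ : Oˣ) : O)) ^ 2) * hr2
        - ((vP : O) * ((v₃ : O) * ((v₃⁻¹ : Oˣ) : O) + 1)) * h2'
    apply hPsq
    exact ⟨algebraMap O K (r * ((v₃⁻¹ : Oˣ) : O)), by rw [hPval, map_pow]; ring⟩
  -- part (b)
  have partb : a' ≤ 2 * c' + 1 := by
    by_contra hcon
    push_neg at hcon
    apply core s (4 * n + t₂ * n₁ * m) hOeq
    have h4n : π ^ (2 * c' + 2) ∣ 4 * n :=
      ((pow_dvd_pow π (by omega : 2 * c' + 2 ≤ 2 * a')).trans hdn).mul_left 4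
    have hrest : π ^ (2 * c' + 2) ∣ t₂ * n₁ * m := by
      have h1 : π ^ (2 * c' + 2) ∣ n₁ := (pow_dvd_pow π (by omega)).trans hdn₁
      exact (h1.mul_left t₂).mul_right m
    exact dvd_add h4n hrest
  -- part (a)
  have parta : b' ≤ c' ∨ a' ≤ c' := by
    by_contra hcon
    push_neg at hcon
    obtain ⟨hb, ha⟩ := hcon
    apply core s (4 * n + t₂ * n₁ * m) hOeq
    have h4n : π ^ (2 * c' + 2) ∣ 4 * n :=
      ((pow_dvd_pow π (by omega : 2 * c' + 2 ≤ 2 * a')).trans hdn).mul_left 4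
    have hrest : π ^ (2 * c' + 2) ∣ t₂ * n₁ * m := by
      have h1 : π ^ b' * π ^ (2 * a') ∣ t₂ * n₁ := mul_dvd_mul hdt₂ hdn₁
      rw [← pow_add] at h1
      exact ((pow_dvd_pow π (by omega : 2 * c' + 2 ≤ b' + 2 * a')).trans h1).mul_right m
    exact dvd_add h4n hrest
  constructor
  · rw [horda, hordb, hordc]
    rcases parta with h | h
    · left; exact_mod_cast h
    · right; exact_mod_cast h
  · rw [horda, hordc]
    have : (a' : ℤ) ≤ 2 * c' + 1 := by exact_mod_cast partb
    omega
end
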